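/- arXiv:1012.4941 — 8 statements merged into one kernel-verified Lean document; each statement's English description precedes it below -/
import Mathlib

section
/- Let S ⊆ R^n be a finite set with lin(S) = R^n, and let Γ be a finite subgroup of GL_n(R) acting on S, with orbits O_1, ..., O_k. Then Fix_Γ(R^n) equals the linear span of the orbit barycenters β(O_1), ..., β(O_k); in particular dim Fix_Γ(R^n) ≤ k. -/
/-!
The Reynolds operator `P = |Γ|⁻¹ ∑_γ γ` is a projection onto the fixed space, so
`Fix_Γ = P(ℝⁿ) = P(span S) = span P(S)`. Since `P` is constant on the orbit `O` of `s` and every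
`γ` permutes `O`, summing `P` over `O` gives `|O| • P s = ∑_{y ∈ O} y`, that is `P s = β(O)`.
There are at most `k` distinct barycenters, whence the dimension bound.
-/

open MulAction Representation

theorem MulAction.sum_orbit_comp_smul {G α M : Type*} [Group G] [MulAction G α]
    [AddCommMonoid M] {a : α} [Fintype (orbit G a)] (f : α → M) (g : G) :
    ∑ y : orbit G a, f (g • (y : α)) = ∑ y : orbit G a, f y :=
  Fintype.sum_bijective (g • ·) (MulAction.bijective g) _ _ fun _ => rfl

theorem MulAction.natCast_card_orbit_ne_zero {G α k : Type*} [Group G] [MulAction G α]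
    [Fintype G] [Semiring k] [Nontrivial k] [Invertible (Fintype.card G : k)] (a : α)
    [Fintype (orbit G a)] :
    (Fintype.card (orbit G a) : k) ≠ 0 := by
  classical
  refine left_ne_zero_of_mul (b := (Fintype.card (stabilizer G a) : k)) ?_
  rw [← Nat.cast_mul, card_orbit_mul_card_stabilizer_eq_card_group]
  exact Invertible.ne_zero _

namespace Representation

section

variable {k G V : Type*} [CommRing k] [Group G] [AddCommGroup V] [Module k V]
  (ρ : Representation k G V) [Fintype G] [Invertible (Fintype.card G : k)]

theorem averageMap_apply (v : V) : averageMap ρ v = ⅟(Fintype.card G : k) • ∑ g, ρ g v := by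
  simp [GroupAlgebra.average, map_sum]

theorem averageMap_comp (g : G) : averageMap ρ ∘ₗ ρ g = averageMap ρ := by
  rw [averageMap, ← asAlgebraHom_single_one, ← Module.End.mul_eq_comp, ← map_mul,
    GroupAlgebra.mul_average_right]

theorem invariants_eq_span_image_averageMap {S : Set V} (hS : Submodule.span k S = ⊤) :
    invariants ρ = Submodule.span k (averageMap ρ '' S) := by
  rw [← Submodule.map_span, hS, Submodule.map_top, (isProj_averageMap ρ).range]

end

section

variable {k G V : Type*} [Field k] [Group G] [Fintype G] [Invertible (Fintype.card G : k)]
  [AddCommGroup V] [Module k V] [DistribMulAction G V] [SMulCommClass G k V]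

theorem card_orbit_smul_averageMap (v : V) [Fintype (orbit G v)] :
    (Fintype.card (orbit G v) : k) • averageMap (ofDistribMulAction k G V) v
      = ∑ y : orbit G v, (y : V) := by
  set P := averageMap (ofDistribMulAction k G V)
  have hconst : ∀ y : orbit G v, P y = P v := by
    rintro ⟨_, g, rfl⟩
    exact LinearMap.congr_fun (averageMap_comp _ g) v
  calc (Fintype.card (orbit G v) : k) • P v = ∑ y : orbit G v, P y := by
        simp [hconst, Finset.card_univ, ← Nat.cast_smul_eq_nsmul k]
    _ = ⅟(Fintype.card G : k) • ∑ g : G, ∑ y : orbit G v, g • (y : V) := by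
        simp only [P, averageMap_apply, ofDistribMulAction_apply_apply]
        rw [← Finset.smul_sum, Finset.sum_comm]
    _ = ∑ y : orbit G v, (y : V) := by
        simp_rw [sum_orbit_comp_smul (fun y : V => y), Finset.sum_const, Finset.card_univ,
          ← Nat.cast_smul_eq_nsmul k, smul_smul, invOf_mul_self, one_smul]

theorem averageMap_ofDistribMulAction_eq_orbit_barycenter (v : V) :
    averageMap (ofDistribMulAction k G V) v =
      ((orbit G v).ncard : k)⁻¹ • ∑ᶠ y ∈ orbit G v, y := by
  have := (Finite.finite_mulAction_orbit (M := G) v).fintype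
  rw [← finsum_set_coe_eq_finsum_mem, finsum_eq_sum_of_fintype,
    ← card_orbit_smul_averageMap (k := k), smul_smul, ← Nat.card_coe_set_eq,
    Nat.card_eq_fintype_card, inv_mul_cancel₀ (natCast_card_orbit_ne_zero v), one_smul]

end

end Representation

theorem finrank_span_le_ncard {R M : Type*} [Semiring R] [StrongRankCondition R] [AddCommMonoid M]
    [Module R M] {T : Set M} (hT : T.Finite) :
    Module.finrank R (Submodule.span R T) ≤ T.ncard := by
  have := hT.fintype
  rw [Set.ncard_eq_toFinset_card']
  exact finrank_span_le_card T

theorem fixed_space_spanned_by_orbit_barycenters_general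
    (n : ℕ) (Γ : Subgroup (GL (Fin n) ℝ)) [Fintype Γ]
    (S : Set (Fin n → ℝ)) (hSfin : S.Finite)
    (hspan : Submodule.span ℝ S = ⊤)
    (orb : (Fin n → ℝ) → Set (Fin n → ℝ))
    (horb : ∀ s, orb s = {w | ∃ γ ∈ Γ, γ.val.mulVec s = w})
    (β : (Fin n → ℝ) → (Fin n → ℝ))
    (hβ : ∀ s, β s = ((orb s).ncard : ℝ)⁻¹ • ∑ᶠ x ∈ orb s, x) :
    {x | ∀ γ ∈ Γ, γ.val.mulVec x = x} = ↑(Submodule.span ℝ (β '' S)) ∧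
    Module.finrank ℝ (Submodule.span ℝ (β '' S)) ≤ {O | ∃ s ∈ S, O = orb s}.ncard := by
  let ρ := ofDistribMulAction ℝ Γ (Fin n → ℝ)
  have : Invertible (Fintype.card Γ : ℝ) := invertibleOfNonzero (by positivity)
  have horb_eq : ∀ s, orb s = orbit Γ s := fun s => by
    rw [horb]
    ext w
    simp [mem_orbit_iff, Units.smul_def]
  have hβ_eq : β = averageMap ρ := funext fun s => by
    rw [hβ, horb_eq, averageMap_ofDistribMulAction_eq_orbit_barycenter]
  have hfix : {x | ∀ γ ∈ Γ, γ.val.mulVec x = x} = ρ.invariants := by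
    ext x
    simp [ρ, Units.smul_def]
  refine ⟨by rw [hfix, hβ_eq, invariants_eq_span_image_averageMap ρ hspan], ?_⟩
  calc Module.finrank ℝ (Submodule.span ℝ (β '' S))
      ≤ (β '' S).ncard := finrank_span_le_ncard (hSfin.image β)
    _ ≤ (orb '' S).ncard := by
      rw [show β = (fun O => (O.ncard : ℝ)⁻¹ • ∑ᶠ x ∈ O, x) ∘ orb from funext hβ, Set.image_comp]
      exact Set.ncard_image_le (hSfin.image orb)
    _ = {O | ∃ s ∈ S, O = orb s}.ncard := by
      simp only [Set.image, eq_comm]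

/-- Let `S ⊆ ℝⁿ` be a finite spanning set, and let `Γ` be a finite subgroup of
`GL_n(ℝ)` acting on `S`, with orbits `O_1, …, O_k`.  Then `Fix_Γ(ℝⁿ)` equals the
linear span of the orbit barycenters `β(O_1), …, β(O_k)`; in particular
`dim Fix_Γ(ℝⁿ) ≤ k`. -/
theorem fixed_space_spanned_by_orbit_barycenters
    (n : ℕ) (Γ : Subgroup (GL (Fin n) ℝ)) [Fintype Γ]
    (S : Set (Fin n → ℝ)) (hSfin : S.Finite)
    (hspan : Submodule.span ℝ S = ⊤)
    (hact : ∀ γ ∈ Γ, ∀ s ∈ S, γ.val.mulVec s ∈ S)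
    (orb : (Fin n → ℝ) → Set (Fin n → ℝ))
    (horb : ∀ s, orb s = {w | ∃ γ ∈ Γ, γ.val.mulVec s = w})
    (β : (Fin n → ℝ) → (Fin n → ℝ))
    (hβ : ∀ s, β s = ((orb s).ncard : ℝ)⁻¹ • ∑ᶠ x ∈ orb s, x) :
    {x | ∀ γ ∈ Γ, γ.val.mulVec x = x} = ↑(Submodule.span ℝ (β '' S)) ∧
    Module.finrank ℝ (Submodule.span ℝ (β '' S)) ≤ {O | ∃ s ∈ S, O = orb s}.ncard :=
  fixed_space_spanned_by_orbit_barycenters_general n Γ S hSfin hspan orb horb β hβ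
end

section
/- If the feasible region P(A,b) is a full-dimensional bounded polytope, then the group of linear automorphisms of LP(A,b,c) is finite. -/
/-!
An automorphism maps the polytope `P` onto itself, so it permutes the extreme points of `P`.
These are finitely many, since an extreme point is determined by the set of constraints tight
at it. By Krein–Milman, `P` is the closed convex hull of its extreme points; as `P` is
full-dimensional they span `ℝⁿ`, so an automorphism is determined by the permutation it induces
on them.
-/

open Matrix Set Filter Topology

namespace Matrix

variable {m n : Type*} [Fintype n] (A : Matrix m n ℝ) (b : m → ℝ)

theorem convex_setOf_mulVec_le : Convex ℝ {x | A *ᵥ x ≤ b} :=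
  (convex_Iic b).linear_preimage A.mulVecLin

theorem isClosed_setOf_mulVec_le : IsClosed {x | A *ᵥ x ≤ b} :=
  isClosed_Iic.preimage A.mulVecLin.continuous_of_finiteDimensional

variable {A b}

theorem eq_zero_of_mem_extremePoints_of_dotProduct_eq_zero [Finite m] {x d : n → ℝ}
    (hx : x ∈ extremePoints ℝ {y | A *ᵥ y ≤ b}) (hd : ∀ i, A i ⬝ᵥ x = b i → A i ⬝ᵥ d = 0) :
    d = 0 := by
  -- Otherwise `x` is the midpoint of two feasible points `x ± t • d`, for `t` small.
  have hline : ∀ᶠ t in 𝓝 (0 : ℝ), x + t • d ∈ {y | A *ᵥ y ≤ b} := by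
    have hrow : ∀ i t, (A *ᵥ (x + t • d)) i = A i ⬝ᵥ x + t * (A i ⬝ᵥ d) := fun i t => by
      simp [mulVec, dotProduct_smul]
    simp only [Set.mem_ofPred, Pi.le_def, hrow, eventually_all]
    intro i
    rcases (hx.1 i).eq_or_lt with htight | hslack
    · exact .of_forall fun t => by rw [hd i htight, mul_zero, add_zero]; exact htight.le
    · have hcont : Continuous fun t : ℝ => A i ⬝ᵥ x + t * (A i ⬝ᵥ d) := by fun_prop
      exact ((hcont.continuousAt (x := 0)).eventually_lt continuousAt_const
        (by simpa [mulVec] using hslack)).mono fun _ => le_of_lt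
  obtain ⟨ε, hε, hball⟩ := Metric.eventually_nhds_iff.mp hline
  have hmem : ∀ t : ℝ, |t| = ε / 2 → x + t • d ∈ {y | A *ᵥ y ≤ b} := fun t ht =>
    hball (by rw [Real.dist_0_eq_abs, ht]; linarith)
  have hseg : x ∈ openSegment ℝ (x + (-(ε / 2)) • d) (x + (ε / 2) • d) :=
    ⟨1 / 2, 1 / 2, by norm_num, by norm_num, by norm_num, by module⟩
  have hfix := hx.2 (hmem _ (by rw [abs_neg, abs_of_pos (by positivity)]))
    (hmem _ (abs_of_pos (by positivity))) hseg
  exact (smul_eq_zero.mp (add_eq_left.mp hfix)).resolve_left (by linarith)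

theorem finite_extremePoints_setOf_mulVec_le [Finite m] :
    (extremePoints ℝ {x | A *ᵥ x ≤ b}).Finite := by
  refine Finite.of_finite_image (f := fun x => {i | A i ⬝ᵥ x = b i}) (toFinite _) ?_
  intro x hx y _ hxy
  refine sub_eq_zero.mp (eq_zero_of_mem_extremePoints_of_dotProduct_eq_zero hx fun i hi => ?_)
  have hi' : A i ⬝ᵥ y = b i := (Set.ext_iff.mp hxy i).mp hi
  rw [dotProduct_sub, hi, hi', sub_self]

end Matrix

theorem IsCompact.affineSpan_extremePoints {E : Type*} [NormedAddCommGroup E] [NormedSpace ℝ E]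
    [FiniteDimensional ℝ E] {s : Set E} (hcomp : IsCompact s) (hconv : Convex ℝ s) :
    affineSpan ℝ (extremePoints ℝ s) = affineSpan ℝ s := by
  refine (affineSpan_mono ℝ extremePoints_subset).antisymm (affineSpan_le.mpr ?_)
  refine (closure_convexHull_extremePoints hcomp hconv).symm.subset.trans ?_
  exact closure_minimal (convexHull_subset_affineSpan _)
    (affineSpan ℝ _).closed_of_finiteDimensional

theorem Submodule.span_eq_top_of_affineSpan_eq_top {k V : Type*} [Ring k] [AddCommGroup V]
    [Module k V] {s : Set V} (hs : affineSpan k s = ⊤) : Submodule.span k s = ⊤ :=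
  eq_top_iff.mpr fun x _ => affineSpan_subset_span (k := k) (hs ▸ AffineSubspace.mem_top k V x)

theorem LinearEquiv.mapsTo_extremePoints {𝕜 E : Type*} [Ring 𝕜] [PartialOrder 𝕜] [IsOrderedRing 𝕜]
    [AddCommGroup E] [Module 𝕜 E] (e : E ≃ₗ[𝕜] E) {s : Set E} (hs : e '' s = s) :
    MapsTo e (extremePoints 𝕜 s) (extremePoints 𝕜 s) := fun x hx => by
  rw [← hs, ← image_extremePoints]
  exact mem_image_of_mem e hx

theorem Set.Finite.setOf_mapsTo_of_span_eq_top {R M : Type*} [Semiring R] [AddCommMonoid M]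
    [Module R M] {s : Set M} (hs : s.Finite) (hspan : Submodule.span R s = ⊤) :
    {f : M →ₗ[R] M | MapsTo f s s}.Finite := by
  have := hs.to_subtype
  refine Set.finite_coe_iff.mp (Finite.of_injective (fun f => f.2.restrict) fun f g hfg => ?_)
  refine Subtype.ext (LinearMap.ext_on hspan fun x hx => ?_)
  exact congrArg Subtype.val (congrFun hfg ⟨x, hx⟩)

theorem automorphism_group_finite_general
    (m n : ℕ) (A : Matrix (Fin m) (Fin n) ℝ) (b : Fin m → ℝ) (c : Fin n → ℝ)
    (P : Set (Fin n → ℝ)) (hP : P = {x | A.mulVec x ≤ b})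
    (H : Fin m → Set (Fin n → ℝ))
    (hbdd : Bornology.IsBounded P) (hfull : affineSpan ℝ P = ⊤) :
    {γ : GL (Fin n) ℝ |
        (∀ i, ∃ j, (fun x => γ.val.mulVec x) '' H i = H j) ∧
        (fun x => γ.val.mulVec x) '' P = P ∧
        (∀ x ∈ P, c ⬝ᵥ γ.val.mulVec x = c ⬝ᵥ x)}.Finite := by
  subst hP
  set E := extremePoints ℝ {x | A *ᵥ x ≤ b}
  have hcomp : IsCompact {x | A *ᵥ x ≤ b} :=
    Metric.isCompact_of_isClosed_isBounded (isClosed_setOf_mulVec_le A b) hbdd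
  have hspan : Submodule.span ℝ E = ⊤ := Submodule.span_eq_top_of_affineSpan_eq_top <| by
    rw [hcomp.affineSpan_extremePoints (convex_setOf_mulVec_le A b), hfull]
  have hmaps : ∀ γ : GL (Fin n) ℝ, (fun x => γ.val *ᵥ x) '' {x | A *ᵥ x ≤ b} = {x | A *ᵥ x ≤ b} →
      MapsTo (toLin' γ.val) E E := fun γ =>
    (GeneralLinearGroup.toLin γ).toLinearEquiv.mapsTo_extremePoints
  have hinj : Function.Injective fun γ : GL (Fin n) ℝ => toLin' γ.val :=
    toLin'.injective.comp Units.val_injective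
  exact ((finite_extremePoints_setOf_mulVec_le.setOf_mapsTo_of_span_eq_top hspan).preimage
    hinj.injOn).subset fun γ hγ => hmaps γ hγ.2.1

/-- If the feasible region `P(A,b)` is a full-dimensional bounded polytope, then
the group of linear automorphisms of `LP(A,b,c)` (linear transformations in
`GL_n(ℝ)` permuting the constraint hyperplane arrangement, leaving `P(A,b)`
invariant, and preserving the objective value on feasible points) is finite. -/
theorem automorphism_group_finite
    (m n : ℕ) (A : Matrix (Fin m) (Fin n) ℝ) (b : Fin m → ℝ) (c : Fin n → ℝ)
    (hrows : ∀ i, A i ≠ 0)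
    (P : Set (Fin n → ℝ)) (hP : P = {x | A.mulVec x ≤ b})
    (H : Fin m → Set (Fin n → ℝ)) (hH : ∀ i, H i = {x | A i ⬝ᵥ x = b i})
    (hbdd : Bornology.IsBounded P) (hfull : affineSpan ℝ P = ⊤) :
    {γ : GL (Fin n) ℝ |
        (∀ i, ∃ j, (fun x => γ.val.mulVec x) '' H i = H j) ∧
        (fun x => γ.val.mulVec x) '' P = P ∧
        (∀ x ∈ P, c ⬝ᵥ γ.val.mulVec x = c ⬝ᵥ x)}.Finite :=
  automorphism_group_finite_general m n A b c P hP H hbdd hfull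
end

section
/- Let Γ ≤ O_n(Z) act sub-transitively on the signed standard basis {±e_1,...,±e_n} (no proper nonzero coordinate subspace is Γ-invariant). Then either Γ acts semi-transitively, with exactly two opposite orbits O and −O each of length n, and Fix_Γ(R^n) is the one-dimensional span of β(O), or Fix_Γ(R^n) = 0. -/
/-!
Each `γ ∈ Γ` maps the finite set `{±eᵢ}` injectively into itself, so its columns are orthonormal and
`γ` is orthogonal; hence for a fixed vector `x` the value `w ⬝ᵥ x` is constant on every `Γ`-orbit.
For `v = ±eᵢ` the coordinate subspace spanned by the `eⱼ ∈ Γv ∪ -Γv` is invariant, so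
sub-transitivity forces `Γv ∪ -Γv = {±eⱼ}`. If some orbit `Γv` differs from `-Γv`, then `Γv` meets
each pair `±eⱼ` exactly once: `Γv = {εⱼ eⱼ}` for a sign vector `ε`, whose barycenter is `ε / n`,
and constancy of `εⱼ xⱼ` makes every fixed `x` a multiple of `ε`. Otherwise `-eⱼ ∈ Γeⱼ` for all `j`,
and constancy gives `-xⱼ = xⱼ`.
-/

open Matrix MulAction Pointwise Submodule

def signedBasis (ι : Type*) [DecidableEq ι] : Set (ι → ℝ) :=
  {v | ∃ i, v = Pi.single i 1 ∨ v = -Pi.single i 1}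

section SignedBasis

variable {ι : Type*} [DecidableEq ι]

theorem single_mem_signedBasis (i : ι) : Pi.single i 1 ∈ signedBasis ι := ⟨i, .inl rfl⟩

variable [Fintype ι]

theorem dotProduct_self_of_mem_signedBasis {v : ι → ℝ} (hv : v ∈ signedBasis ι) :
    v ⬝ᵥ v = 1 := by
  obtain ⟨i, rfl | rfl⟩ := hv <;> simp

theorem dotProduct_eq_zero_of_mem_signedBasis {u w : ι → ℝ} (hu : u ∈ signedBasis ι)
    (hw : w ∈ signedBasis ι) (h : u ≠ w) (h' : u ≠ -w) : u ⬝ᵥ w = 0 := by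
  obtain ⟨i, rfl | rfl⟩ := hu <;> obtain ⟨j, rfl | rfl⟩ := hw <;>
    obtain rfl | hij := eq_or_ne i j <;> simp_all

theorem transpose_mul_self_eq_one_of_mapsTo_signedBasis {A : Matrix ι ι ℝ}
    (hA : Function.Injective A.mulVec)
    (hAS : Set.MapsTo A.mulVec (signedBasis ι) (signedBasis ι)) :
    Aᵀ * A = 1 := by
  ext i j
  have hcol (k : ι) := hAS (single_mem_signedBasis k)
  have hentry : (Aᵀ * A) i j = A *ᵥ Pi.single i 1 ⬝ᵥ A *ᵥ Pi.single j 1 := by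
    simp [mul_apply, dotProduct]
  rw [hentry, one_apply]
  split_ifs with hij
  · exact hij ▸ dotProduct_self_of_mem_signedBasis (hcol i)
  · refine dotProduct_eq_zero_of_mem_signedBasis (hcol i) (hcol j) (hA.ne ?_) ?_
    · exact fun h => by simpa [Pi.single_apply, hij] using congrFun h j
    · rw [← mulVec_neg]
      exact hA.ne fun h => by simpa [Pi.single_apply, hij] using congrFun h i

end SignedBasis

theorem mulVec_dotProduct_mulVec_of_transpose_mul_self_eq_one {ι R : Type*} [Fintype ι]
    [DecidableEq ι] [CommSemiring R] {A : Matrix ι ι R} (hA : Aᵀ * A = 1) (u w : ι → R) :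
    A *ᵥ u ⬝ᵥ A *ᵥ w = u ⬝ᵥ w := by
  rw [dotProduct_mulVec, ← vecMul_transpose, vecMul_vecMul, hA, vecMul_one]

section Orbit

variable {G M : Type*} [Group G] [AddGroup M] [DistribMulAction G M]

theorem orbit_neg (v : M) : orbit G (-v) = -orbit G v := by
  ext w
  simp only [Set.mem_neg, mem_orbit_iff, smul_neg, neg_eq_iff_eq_neg]

theorem neg_mem_orbit_of_mem_of_neg_mem {v w : M} (hw : w ∈ orbit G v)
    (hw' : -w ∈ orbit G v) : -v ∈ orbit G v := by
  obtain ⟨g, rfl⟩ := hw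
  obtain ⟨h, hh : h • v = -(g • v)⟩ := hw'
  exact ⟨g⁻¹ * h, show (g⁻¹ * h) • v = -v by rw [mul_smul, hh, smul_neg, inv_smul_smul]⟩

theorem smul_finsum_mem_orbit {M : Type*} [AddCommMonoid M] [DistribMulAction G M] {v : M}
    (hv : (orbit G v).Finite) (g : G) : g • ∑ᶠ w ∈ orbit G v, w = ∑ᶠ w ∈ orbit G v, w := by
  conv_rhs =>
    rw [← smul_orbit g v, ← Set.image_smul, finsum_mem_image (MulAction.injective g).injOn]
  exact smul_finsum_mem hv

end Orbit

section SingleRange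

variable {ι M : Type*} [DecidableEq ι] [AddCommMonoid M] {ε : ι → M}

theorem injective_single_of_ne_zero (hε : ∀ i, ε i ≠ 0) :
    Function.Injective fun i => Pi.single i (ε i) := by
  intro i j hij
  by_contra hne
  exact hε i (by simpa [Pi.single_apply, hne] using congrFun hij i)

theorem finsum_mem_range_single [Fintype ι] (hε : ∀ i, ε i ≠ 0) :
    ∑ᶠ w ∈ Set.range (fun i => Pi.single i (ε i)), w = ε := by
  rw [finsum_mem_range (injective_single_of_ne_zero hε), finsum_eq_sum_of_fintype,
    Finset.univ_sum_single]

end SingleRange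

section SignedPermutationAction

variable {ι : Type*} [Fintype ι] [DecidableEq ι] (Γ : Subgroup (GL ι ℝ))

theorem dotProduct_eq_of_mem_orbit
    (hΓ : ∀ γ : Γ, ∀ v ∈ signedBasis ι, γ • v ∈ signedBasis ι) {w w' x : ι → ℝ}
    (hw' : w' ∈ orbit Γ w) (hx : x ∈ fixedPoints Γ (ι → ℝ)) : w' ⬝ᵥ x = w ⬝ᵥ x := by
  obtain ⟨γ, rfl⟩ := hw'
  have hγ : (γ : GL ι ℝ).valᵀ * (γ : GL ι ℝ).val = 1 :=
    transpose_mul_self_eq_one_of_mapsTo_signedBasis (fun _ _ h => MulAction.injective γ h)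
      (hΓ γ)
  conv_lhs => rw [← hx γ]
  exact mulVec_dotProduct_mulVec_of_transpose_mul_self_eq_one hγ w x

theorem smul_mem_span_single_of_neg_mem
    (hΓ : ∀ γ : Γ, ∀ v ∈ signedBasis ι, γ • v ∈ signedBasis ι) {T : Set (ι → ℝ)}
    (hT : ∀ γ : Γ, ∀ y ∈ T, γ • y ∈ T) (hTneg : ∀ y ∈ T, -y ∈ T) (γ : Γ) {x : ι → ℝ}
    (hx : x ∈ span ℝ ((fun i => Pi.single i 1) '' {i | Pi.single i 1 ∈ T})) :
    γ • x ∈ span ℝ ((fun i => Pi.single i 1) '' {i | Pi.single i 1 ∈ T}) := by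
  refine (span_le (p := (span ℝ _).comap (DistribSMul.toLinearMap ℝ _ γ))).2 ?_ hx
  rintro _ ⟨i, hi, rfl⟩
  rw [SetLike.mem_coe, mem_comap, DistribSMul.toLinearMap_apply]
  have hγi : γ • Pi.single i 1 ∈ T := hT γ _ hi
  obtain ⟨k, hk | hk⟩ := hΓ γ _ (single_mem_signedBasis i) <;> rw [hk] at hγi ⊢
  · exact subset_span ⟨k, hγi, rfl⟩
  · exact neg_mem (subset_span ⟨k, by simpa using hTneg _ hγi, rfl⟩)

theorem signedBasis_subset_orbit_union_orbit_neg
    (hΓ : ∀ γ : Γ, ∀ v ∈ signedBasis ι, γ • v ∈ signedBasis ι)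
    (hsub : ∀ I : Set ι, I.Nonempty → I ≠ Set.univ →
      ¬ ∀ γ : Γ, ∀ x ∈ span ℝ ((fun i => Pi.single i (1 : ℝ)) '' I),
        γ • x ∈ span ℝ ((fun i => Pi.single i (1 : ℝ)) '' I))
    {v : ι → ℝ} (hv : v ∈ signedBasis ι) : signedBasis ι ⊆ orbit Γ v ∪ orbit Γ (-v) := by
  set T := orbit Γ v ∪ orbit Γ (-v)
  have hT (γ : Γ) : ∀ y ∈ T, γ • y ∈ T := by
    rintro y (hy | hy)
    exacts [.inl (smul_orbit_subset γ v (Set.smul_mem_smul_set hy)),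
      .inr (smul_orbit_subset γ (-v) (Set.smul_mem_smul_set hy))]
  have hTneg : ∀ y ∈ T, -y ∈ T := by
    rintro y (hy | hy)
    · exact .inr (orbit_neg (G := Γ) v ▸ Set.neg_mem_neg.2 hy)
    · rw [orbit_neg] at hy
      exact .inl hy
  have hI : {i | Pi.single i 1 ∈ T} = Set.univ := by
    by_contra hne
    refine hsub _ ?_ hne (smul_mem_span_single_of_neg_mem Γ hΓ hT hTneg)
    obtain ⟨i, rfl | rfl⟩ := hv
    · exact ⟨i, .inl (mem_orbit_self _)⟩
    · exact ⟨i, .inr (by simp [mem_orbit_self])⟩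
  rintro _ ⟨i, rfl | rfl⟩
  · exact Set.eq_univ_iff_forall.1 hI i
  · exact hTneg _ (Set.eq_univ_iff_forall.1 hI i)

theorem fixedPoints_eq_zero_of_neg_mem_orbit
    (hΓ : ∀ γ : Γ, ∀ v ∈ signedBasis ι, γ • v ∈ signedBasis ι)
    (hneg : ∀ i, -Pi.single i 1 ∈ orbit Γ (Pi.single i 1 : ι → ℝ)) :
    fixedPoints Γ (ι → ℝ) = {0} := by
  refine Set.eq_singleton_iff_unique_mem.2
    ⟨fun γ => smul_zero γ, fun x hx => funext fun i => ?_⟩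
  have hxi := dotProduct_eq_of_mem_orbit Γ hΓ (hneg i) hx
  simp only [neg_dotProduct, single_one_dotProduct] at hxi
  rw [Pi.zero_apply]
  linarith

theorem exists_orbit_eq_range_single
    (hΓ : ∀ γ : Γ, ∀ v ∈ signedBasis ι, γ • v ∈ signedBasis ι) {v : ι → ℝ}
    (hv : v ∈ signedBasis ι) (hcover : signedBasis ι ⊆ orbit Γ v ∪ orbit Γ (-v))
    (hv' : -v ∉ orbit Γ v) :
    ∃ ε : ι → ℝ, (∀ i, ε i * ε i = 1) ∧ orbit Γ v = Set.range fun i => Pi.single i (ε i) := by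
  classical
  refine ⟨fun i => if Pi.single i 1 ∈ orbit Γ v then 1 else -1,
    fun i => by dsimp only; split_ifs <;> norm_num, Set.Subset.antisymm ?_ ?_⟩
  · have hOS : orbit Γ v ⊆ signedBasis ι := by
      rintro _ ⟨γ, rfl⟩
      exact hΓ γ v hv
    rintro w hw
    obtain ⟨i, rfl | rfl⟩ := hOS hw
    · exact ⟨i, by simp [hw]⟩
    · have hi : Pi.single i 1 ∉ orbit Γ v := fun h =>
        hv' (neg_mem_orbit_of_mem_of_neg_mem h hw)
      exact ⟨i, by simp [hi, Pi.single_neg]⟩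
  · rintro _ ⟨i, rfl⟩
    dsimp only
    split_ifs with hi
    · exact hi
    · have hi' := hcover (single_mem_signedBasis i)
      rw [orbit_neg] at hi'
      simpa [hi, Pi.single_neg] using hi'

theorem fixedPoints_eq_span_of_orbit_eq_range
    (hΓ : ∀ γ : Γ, ∀ v ∈ signedBasis ι, γ • v ∈ signedBasis ι) {v ε : ι → ℝ}
    (hε : ∀ i, ε i * ε i = 1) (hO : orbit Γ v = Set.range fun i => Pi.single i (ε i)) :
    fixedPoints Γ (ι → ℝ) = span ℝ {ε} := by
  ext x
  rw [SetLike.mem_coe, mem_span_singleton]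
  constructor
  · intro hx
    refine ⟨v ⬝ᵥ x, funext fun i => ?_⟩
    have hxi := dotProduct_eq_of_mem_orbit Γ hΓ
      (hO ▸ ⟨i, rfl⟩ : Pi.single i (ε i) ∈ orbit Γ v) hx
    rw [single_dotProduct] at hxi
    rw [Pi.smul_apply, smul_eq_mul, ← hxi]
    linear_combination x i * hε i
  · rintro ⟨a, rfl⟩ γ
    have hεfix : γ • ε = ε := by
      have h := smul_finsum_mem_orbit (hO ▸ Set.finite_range _) γ
      rwa [hO, finsum_mem_range_single fun i => left_ne_zero_of_mul_eq_one (hε i)] at h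
    rw [smul_comm, hεfix]

end SignedPermutationAction

theorem subtransitive_dichotomy_general
    (n : ℕ) (Γ : Subgroup (GL (Fin n) ℝ))
    (S : Set (Fin n → ℝ))
    (hS : S = {v | ∃ i : Fin n, v = Pi.single i 1 ∨ v = -Pi.single i 1})
    (hsigned : ∀ γ ∈ Γ, ∀ v ∈ S, γ.val.mulVec v ∈ S)
    (orb : (Fin n → ℝ) → Set (Fin n → ℝ))
    (horb : ∀ v, orb v = {w | ∃ γ ∈ Γ, γ.val.mulVec v = w})
    (β : Set (Fin n → ℝ) → (Fin n → ℝ))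
    (hβ : ∀ O : Set (Fin n → ℝ), β O = (O.ncard : ℝ)⁻¹ • ∑ᶠ x ∈ O, x)
    (hsub : ∀ I : Set (Fin n), I.Nonempty → I ≠ Set.univ →
      ¬ (∀ γ ∈ Γ, ∀ x ∈ Submodule.span ℝ ((fun i => Pi.single i (1:ℝ)) '' I),
            γ.val.mulVec x ∈ Submodule.span ℝ ((fun i => Pi.single i (1:ℝ)) '' I))) :
    (∃ v ∈ S,
        (orb v).ncard = n ∧
        orb v ≠ (fun y => -y) '' orb v ∧
        (∀ w ∈ S, orb w = orb v ∨ orb w = (fun y => -y) '' orb v) ∧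
        {x | ∀ γ ∈ Γ, γ.val.mulVec x = x} = ↑(Submodule.span ℝ {β (orb v)}) ∧
        Module.finrank ℝ (Submodule.span ℝ {β (orb v)}) = 1) ∨
    {x | ∀ γ ∈ Γ, γ.val.mulVec x = x} = {0} := by
  obtain rfl : S = signedBasis (Fin n) := hS
  obtain rfl : orb = fun v => orbit Γ v := funext fun v => by
    rw [horb]
    ext
    exact ⟨fun ⟨γ, hγ, h⟩ => ⟨⟨γ, hγ⟩, h⟩, fun ⟨γ, h⟩ => ⟨γ, γ.2, h⟩⟩
  have hfix : {x | ∀ γ ∈ Γ, γ.val.mulVec x = x} = fixedPoints Γ (Fin n → ℝ) := by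
    ext
    exact ⟨fun h γ => h γ γ.2, fun h γ hγ => h ⟨γ, hγ⟩⟩
  have hΓ : ∀ γ : Γ, ∀ v ∈ signedBasis (Fin n), γ • v ∈ signedBasis (Fin n) :=
    fun γ => hsigned γ γ.2
  have hcover {v} (hv : v ∈ signedBasis (Fin n)) :=
    signedBasis_subset_orbit_union_orbit_neg Γ hΓ
      (fun I hI hne h => hsub I hI hne fun γ hγ => h ⟨γ, hγ⟩) hv
  simp only [hfix, Set.image_neg_eq_neg]
  by_cases hsym : ∀ v ∈ signedBasis (Fin n), -v ∈ orbit Γ v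
  · exact .inr (fixedPoints_eq_zero_of_neg_mem_orbit Γ hΓ
      fun i => hsym _ (single_mem_signedBasis i))
  push Not at hsym
  obtain ⟨v, hv, hv'⟩ := hsym
  obtain ⟨i₀, -⟩ := id hv
  obtain ⟨ε, hε, hO⟩ := exists_orbit_eq_range_single Γ hΓ hv (hcover hv) hv'
  have hε0 (i) : ε i ≠ 0 := left_ne_zero_of_mul_eq_one (hε i)
  have hn : (n : ℝ)⁻¹ ≠ 0 := inv_ne_zero (Nat.cast_ne_zero.2 i₀.pos.ne')
  have hncard : (orbit Γ v).ncard = n := by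
    rw [hO, Set.ncard_range_of_injective (injective_single_of_ne_zero hε0), Nat.card_fin]
  have hβO : β (orbit Γ v) = (n : ℝ)⁻¹ • ε := by
    rw [hβ, hncard, hO, finsum_mem_range_single hε0]
  refine .inl ⟨v, hv, hncard, fun h => hv' (h ▸ Set.neg_mem_neg.2 (mem_orbit_self v)), ?_, ?_, ?_⟩
  · intro w hw
    rcases hcover hv hw with h | h
    exacts [.inl (orbit_eq_iff.2 h), .inr (orbit_neg (G := Γ) v ▸ orbit_eq_iff.2 h)]
  · rw [hβO, span_singleton_smul_eq hn.isUnit, fixedPoints_eq_span_of_orbit_eq_range Γ hΓ hε hO]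
  · exact finrank_span_singleton (hβO ▸ smul_ne_zero hn fun h => hε0 i₀ (congrFun h i₀))

/-- Let `Γ ≤ O_n(ℤ)` act sub-transitively on the signed standard basis
`{±e_1,…,±e_n}` (no proper nonzero coordinate subspace is `Γ`-invariant).
Then either `Γ` acts semi-transitively, with exactly two opposite orbits `O`
and `−O` each of length `n`, and `Fix_Γ(ℝⁿ)` is the one-dimensional span of the
barycenter `β(O)`, or `Fix_Γ(ℝⁿ) = 0`. -/
theorem subtransitive_dichotomy
    (n : ℕ) (hn : 0 < n) (Γ : Subgroup (GL (Fin n) ℝ))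
    (S : Set (Fin n → ℝ))
    (hS : S = {v | ∃ i : Fin n, v = Pi.single i 1 ∨ v = -Pi.single i 1})
    (hsigned : ∀ γ ∈ Γ, ∀ v ∈ S, γ.val.mulVec v ∈ S)
    (orb : (Fin n → ℝ) → Set (Fin n → ℝ))
    (horb : ∀ v, orb v = {w | ∃ γ ∈ Γ, γ.val.mulVec v = w})
    (β : Set (Fin n → ℝ) → (Fin n → ℝ))
    (hβ : ∀ O : Set (Fin n → ℝ), β O = (O.ncard : ℝ)⁻¹ • ∑ᶠ x ∈ O, x)
    (hsub : ∀ I : Set (Fin n), I.Nonempty → I ≠ Set.univ →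
      ¬ (∀ γ ∈ Γ, ∀ x ∈ Submodule.span ℝ ((fun i => Pi.single i (1:ℝ)) '' I),
            γ.val.mulVec x ∈ Submodule.span ℝ ((fun i => Pi.single i (1:ℝ)) '' I))) :
    (∃ v ∈ S,
        (orb v).ncard = n ∧
        orb v ≠ (fun y => -y) '' orb v ∧
        (∀ w ∈ S, orb w = orb v ∨ orb w = (fun y => -y) '' orb v) ∧
        {x | ∀ γ ∈ Γ, γ.val.mulVec x = x} = ↑(Submodule.span ℝ {β (orb v)}) ∧
        Module.finrank ℝ (Submodule.span ℝ {β (orb v)}) = 1) ∨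
    {x | ∀ γ ∈ Γ, γ.val.mulVec x = x} = {0} :=
  subtransitive_dichotomy_general n Γ S hS hsigned orb horb β hβ hsub
end

section
/- Let x be a feasible point of LP(A,b,c) lying in the k-th c-layer, and let γ be a symmetry of ILP(A,b,c) (an orthogonal automorphism) with γx ≠ x. Then every point p in the open line segment (x, γx) is feasible and strictly closer to the center z of the k-th c-layer than x: ‖p − z‖ < ‖x − z‖. -/
open Matrix

/-- Let `x` be a feasible point of `LP(A,b,c)` lying in the `k`-th `c`-layer,
and let `γ` be a symmetry of `ILP(A,b,c)` (an orthogonal automorphism of the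
linear program) with `γx ≠ x`.  Then every point `p` in the open segment
`(x, γx)` is feasible and strictly closer (in Euclidean distance) to the center
`z` of the layer (the intersection of the layer with the line `ℝ·c`, which is
fixed by `γ`) than `x`. -/
theorem interior_points_feasible_and_closer_to_center
    (m n : ℕ) (A : Matrix (Fin m) (Fin n) ℝ) (b : Fin m → ℝ) (c : Fin n → ℝ)
    (hc : c ≠ 0)
    (P : Set (Fin n → ℝ)) (hP : P = {x | A.mulVec x ≤ b})
    (γ : GL (Fin n) ℝ) (horth : γ.val ∈ Matrix.orthogonalGroup (Fin n) ℝ)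
    (hfeas : (fun y => γ.val.mulVec y) '' P = P)
    (hobj : ∀ y ∈ P, c ⬝ᵥ γ.val.mulVec y = c ⬝ᵥ y)
    (x : Fin n → ℝ) (hx : x ∈ P) (hγx : γ.val.mulVec x ≠ x)
    (z : Fin n → ℝ) (hz : z = ((c ⬝ᵥ x) / (c ⬝ᵥ c)) • c)
    (hzfix : γ.val.mulVec z = z) :
    ∀ t : ℝ, 0 < t → t < 1 →
      (t • x + (1 - t) • γ.val.mulVec x) ∈ P ∧
      ∑ i, ((t • x + (1 - t) • γ.val.mulVec x) i - z i) ^ 2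
        < ∑ i, (x i - z i) ^ 2 := by
  intro t ht0 ht1
  set g : Fin n → ℝ := γ.val.mulVec x with hg
  have hgP : g ∈ P := by
    rw [← hfeas]; exact ⟨x, hx, rfl⟩
  constructor
  · -- feasibility by convexity
    rw [hP] at hx hgP ⊢
    intro i
    have h1 : (A.mulVec x) i ≤ b i := hx i
    have h2 : (A.mulVec g) i ≤ b i := hgP i
    have : A.mulVec (t • x + (1 - t) • g) = t • A.mulVec x + (1 - t) • A.mulVec g := by
      rw [Matrix.mulVec_add, Matrix.mulVec_smul, Matrix.mulVec_smul]
    rw [this]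
    have ht1' : 0 ≤ 1 - t := by linarith
    calc (t • A.mulVec x + (1 - t) • A.mulVec g) i
        = t * (A.mulVec x) i + (1 - t) * (A.mulVec g) i := rfl
      _ ≤ t * b i + (1 - t) * b i := by
          apply add_le_add
          · exact mul_le_mul_of_nonneg_left h1 ht0.le
          · exact mul_le_mul_of_nonneg_left h2 ht1'
      _ = b i := by ring
  · -- distance part
    have hMT : γ.valᵀ * γ.val = 1 := by
      have := (Matrix.mem_orthogonalGroup_iff' (Fin n) ℝ).mp horth
      simpa [Matrix.star_eq_conjTranspose, Matrix.conjTranspose_eq_transpose_of_trivial] using this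
    have key : ∀ v : Fin n → ℝ, (γ.val.mulVec v) ⬝ᵥ (γ.val.mulVec v) = v ⬝ᵥ v := by
      intro v
      rw [Matrix.dotProduct_mulVec, ← Matrix.mulVec_transpose, Matrix.mulVec_mulVec, hMT,
        Matrix.one_mulVec]
    have hgz : g - z = γ.val.mulVec (x - z) := by
      rw [Matrix.mulVec_sub, hzfix]
    have hnorm : ∑ i, (g i - z i) ^ 2 = ∑ i, (x i - z i) ^ 2 := by
      have h1 : ∑ i, (g i - z i) ^ 2 = (g - z) ⬝ᵥ (g - z) := by
        simp [dotProduct, sq, Pi.sub_apply]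
      have h2 : ∑ i, (x i - z i) ^ 2 = (x - z) ⬝ᵥ (x - z) := by
        simp [dotProduct, sq, Pi.sub_apply]
      rw [h1, h2, hgz, key]
    set S : ℝ := ∑ i, (x i - z i) ^ 2 with hS
    set D : ℝ := ∑ i, (x i - z i) * (g i - z i) with hD
    have hDS : D < S := by
      have hpos : 0 < ∑ i, (x i - g i) ^ 2 := by
        have hne : x ≠ g := fun h => hγx (h.symm)
        obtain ⟨j, hj⟩ := Function.ne_iff.mp hne
        apply Finset.sum_pos' (fun i _ => sq_nonneg _)
        exact ⟨j, Finset.mem_univ j, by have := sub_ne_zero.mpr hj; positivity⟩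
      have hexp : ∑ i, (x i - g i) ^ 2 = S + ∑ i, (g i - z i) ^ 2 - 2 * D := by
        rw [hS, hD, Finset.mul_sum, ← Finset.sum_add_distrib, ← Finset.sum_sub_distrib]
        apply Finset.sum_congr rfl
        intro i _; ring
      rw [hnorm] at hexp
      nlinarith [hexp, hpos]
    have hexp2 : ∑ i, ((t • x + (1 - t) • g) i - z i) ^ 2
        = t ^ 2 * S + 2 * t * (1 - t) * D + (1 - t) ^ 2 * ∑ i, (g i - z i) ^ 2 := by
      rw [hS, hD, Finset.mul_sum, Finset.mul_sum, Finset.mul_sum,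
        ← Finset.sum_add_distrib, ← Finset.sum_add_distrib]
      apply Finset.sum_congr rfl
      intro i _
      simp only [Pi.add_apply, Pi.smul_apply, smul_eq_mul]
      ring
    rw [hexp2, hnorm]
    nlinarith [mul_pos ht0 (by linarith : (0:ℝ) < 1 - t), hDS]
end

section
/- For c = 1 (the all-ones vector) and an integer k = qn + r with q ∈ Z and r ∈ {0,1,...,n−1}, the set of core points in the k-th 1-layer (integral points of H_{1,k} minimizing distance to the center (k/n)·1) consists exactly of the integer vectors with r coordinates equal to q+1 and n−r coordinates equal to q; there are C(n,r) of them, and they are the vertices of the (r,n)-hypersimplex translated by q·1. -/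
/-!
On a layer `∑ xᵢ = k` the squared distance to `a • 𝟙` is `∑ xᵢ² - 2ak + na²`, so which layer
points are closest does not depend on `a`: the center `(k/n) • 𝟙` may be replaced by the integral
point `q • 𝟙`. With `z = x - q • 𝟙` we then minimize `∑ zᵢ²` over integer vectors with
`∑ zᵢ = r`. Since `z ≤ z²` on `ℤ`, with equality exactly for `z ∈ {0, 1}`, the minimum is `r`,
attained exactly at the indicator vectors of the `r`-subsets.
-/

open Finset

section Shift

variable {ι R : Type*} [Fintype ι]

lemma sum_sub_sq_eq [CommRing R] (x : ι → R) (a : R) :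
    ∑ i, (x i - a) ^ 2 = ∑ i, x i ^ 2 - 2 * a * ∑ i, x i + Fintype.card ι • a ^ 2 := by
  simp only [sub_sq, sum_add_distrib, sum_sub_distrib, sum_const, card_univ, mul_sum, mul_assoc,
    mul_comm a]

lemma sum_sub_sq_le_sum_sub_sq_iff [CommRing R] [PartialOrder R] [IsOrderedAddMonoid R]
    {x y : ι → R} (hxy : ∑ i, x i = ∑ i, y i) (a b : R) :
    ∑ i, (x i - a) ^ 2 ≤ ∑ i, (y i - a) ^ 2 ↔ ∑ i, (x i - b) ^ 2 ≤ ∑ i, (y i - b) ^ 2 := by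
  simp only [sum_sub_sq_eq, hxy, add_le_add_iff_right, sub_le_sub_iff_right]

end Shift

namespace Int

variable {ι : Type*} [Fintype ι]

lemma sum_le_sum_sq (z : ι → ℤ) : ∑ i, z i ≤ ∑ i, z i ^ 2 :=
  sum_le_sum fun i _ => le_self_sq (z i)

lemma sum_sq_eq_sum_iff (z : ι → ℤ) :
    ∑ i, z i ^ 2 = ∑ i, z i ↔ ∀ i, z i = 0 ∨ z i = 1 := by
  rw [eq_comm, sum_eq_sum_iff_of_le fun i _ => le_self_sq (z i)]
  simp only [mem_univ, true_implies, eq_comm (a := z _), sq,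
    ← isIdempotentElem_iff, IsIdempotentElem.iff_eq_zero_or_one]

lemma le_sum_sq_sub_of_sum_eq {q : ℤ} {r : ℕ} {y : ι → ℤ}
    (hy : ∑ i, y i = q * Fintype.card ι + r) :
    (r : ℤ) ≤ ∑ i, (y i - q) ^ 2 := by
  have : ∑ i, (y i - q) = r := by simp [sum_sub_distrib, hy, mul_comm]
  exact this ▸ sum_le_sum_sq _

lemma sum_cast_sub_sq_le_iff {x y : ι → ℤ} (hxy : ∑ i, x i = ∑ i, y i) (a : ℝ) (q : ℤ) :
    ∑ i, ((x i : ℝ) - a) ^ 2 ≤ ∑ i, ((y i : ℝ) - a) ^ 2 ↔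
      ∑ i, (x i - q) ^ 2 ≤ ∑ i, (y i - q) ^ 2 := by
  rw [sum_sub_sq_le_sum_sub_sq_iff (by exact_mod_cast hxy) a (q : ℝ)]
  exact_mod_cast Iff.rfl

end Int

section HypersimplexVertex

variable {ι : Type*} [DecidableEq ι]

/-- `q • 𝟙 + 𝟙_S`, a vertex of the translated hypersimplex `q • 𝟙 + Δ(#S, card ι)`. -/
def translatedHypersimplexVertex (q : ℤ) (S : Finset ι) : ι → ℤ :=
  fun i => q + if i ∈ S then 1 else 0

lemma translatedHypersimplexVertex_injective (q : ℤ) :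
    Function.Injective (translatedHypersimplexVertex (ι := ι) q) := by
  intro S T hST
  ext i
  have := congrFun hST i
  by_cases hS : i ∈ S <;> by_cases hT : i ∈ T <;> simp_all [translatedHypersimplexVertex]

variable [Fintype ι]

lemma sum_translatedHypersimplexVertex (q : ℤ) (S : Finset ι) :
    ∑ i, translatedHypersimplexVertex q S i = q * Fintype.card ι + #S := by
  simp [translatedHypersimplexVertex, sum_add_distrib, mul_comm]

lemma sum_sq_translatedHypersimplexVertex_sub (q : ℤ) (S : Finset ι) :
    ∑ i, (translatedHypersimplexVertex q S i - q) ^ 2 = #S := by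
  simp [translatedHypersimplexVertex, apply_ite (· ^ 2)]

lemma eq_translatedHypersimplexVertex {x : ι → ℤ} {q : ℤ} (hx : ∀ i, x i = q ∨ x i = q + 1) :
    x = translatedHypersimplexVertex q {i | x i = q + 1} := by
  funext i
  rcases hx i with h | h <;> simp [translatedHypersimplexVertex, h]

lemma ncard_translatedHypersimplexVertex (q : ℤ) (r : ℕ) :
    {x | ∃ S : Finset ι, #S = r ∧ x = translatedHypersimplexVertex q S}.ncard
      = (Fintype.card ι).choose r := by
  have : {x | ∃ S : Finset ι, #S = r ∧ x = translatedHypersimplexVertex q S}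
      = translatedHypersimplexVertex q '' ((powersetCard r univ : Finset (Finset ι)) : Set _) := by
    ext x
    simp [eq_comm (a := x)]
  rw [this, Set.ncard_image_of_injective _ (translatedHypersimplexVertex_injective q),
    Set.ncard_coe_finset, card_powersetCard, card_univ]

variable {q : ℤ} {r : ℕ}

lemma isMinOn_sum_sq_sub_iff (hr : r ≤ Fintype.card ι) {k : ℤ}
    (hk : k = q * Fintype.card ι + r) {x : ι → ℤ} (hx : ∑ i, x i = k) :
    IsMinOn (fun y : ι → ℤ => ∑ i, (y i - q) ^ 2) {y | ∑ i, y i = k} x ↔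
      ∃ S : Finset ι, #S = r ∧ x = translatedHypersimplexVertex q S := by
  subst hk
  rw [isMinOn_iff]
  constructor
  · intro hmin
    obtain ⟨S₀, -, hS₀⟩ := exists_subset_card_eq (s := (univ : Finset ι)) (n := r) (by simpa)
    have hS₀_mem : ∑ i, translatedHypersimplexVertex q S₀ i = q * Fintype.card ι + r := by
      rw [sum_translatedHypersimplexVertex, hS₀]
    have hle := hmin _ hS₀_mem
    rw [sum_sq_translatedHypersimplexVertex_sub, hS₀] at hle
    have hsum : ∑ i, (x i - q) = r := by simp [sum_sub_distrib, hx, mul_comm]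
    have hsq : ∑ i, (x i - q) ^ 2 = ∑ i, (x i - q) := by
      rw [hsum]; exact le_antisymm hle (Int.le_sum_sq_sub_of_sum_eq hx)
    have h01 : ∀ i, x i = q ∨ x i = q + 1 := fun i =>
      ((Int.sum_sq_eq_sum_iff _).1 hsq i).imp (by omega) (by omega)
    refine ⟨_, ?_, eq_translatedHypersimplexVertex h01⟩
    have := eq_translatedHypersimplexVertex h01 ▸ hx
    rw [sum_translatedHypersimplexVertex] at this
    omega
  · rintro ⟨S, rfl, rfl⟩ y hy
    rw [sum_sq_translatedHypersimplexVertex_sub]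
    exact Int.le_sum_sq_sub_of_sum_eq hy

end HypersimplexVertex

theorem core_points_of_one_layer_general
    (n : ℕ) (q : ℤ) (r : ℕ) (hr : r < n) (k : ℤ) (hk : k = q * n + r)
    (Core : Set (Fin n → ℤ))
    (hCore : Core = {x | (∑ i, x i) = k ∧
        ∀ y : Fin n → ℤ, (∑ i, y i) = k →
          ∑ i, ((x i : ℝ) - (k : ℝ) / (n : ℝ)) ^ 2
            ≤ ∑ i, ((y i : ℝ) - (k : ℝ) / (n : ℝ)) ^ 2}) :
    Core = {x | ∃ S : Finset (Fin n), S.card = r ∧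
        x = fun i => q + if i ∈ S then 1 else 0} ∧
    Core.ncard = Nat.choose n r := by
  have hr' : r ≤ Fintype.card (Fin n) := by simpa using hr.le
  have hk' : k = q * Fintype.card (Fin n) + r := by simpa using hk
  have hCore_eq : Core = {x | ∃ S : Finset (Fin n), #S = r ∧
      x = translatedHypersimplexVertex q S} := by
    subst hCore
    ext x
    constructor
    · rintro ⟨hx, hmin⟩
      refine (isMinOn_sum_sq_sub_iff hr' hk' hx).1 (isMinOn_iff.2 fun y hy => ?_)
      exact (Int.sum_cast_sub_sq_le_iff (hx.trans hy.symm) _ q).1 (hmin y hy)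
    · rintro ⟨S, hS, rfl⟩
      have hx : ∑ i, translatedHypersimplexVertex q S i = k := by
        rw [sum_translatedHypersimplexVertex, hS, hk']
      have hmin := isMinOn_iff.1 ((isMinOn_sum_sq_sub_iff hr' hk' hx).2 ⟨S, hS, rfl⟩)
      exact ⟨hx, fun y hy =>
        (Int.sum_cast_sub_sq_le_iff (hx.trans hy.symm) _ q).2 (hmin y hy)⟩
  refine ⟨hCore_eq, ?_⟩
  simpa [hCore_eq] using ncard_translatedHypersimplexVertex (ι := Fin n) q r

/-- For `c = 𝟙` and an integer `k = qn + r` with `q ∈ ℤ`, `0 ≤ r < n`, the set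
of core points of the `k`-th `𝟙`-layer (integral points of the layer minimizing
Euclidean distance to the center `(k/n)·𝟙`) consists exactly of the integer
vectors with `r` coordinates equal to `q+1` and `n−r` coordinates equal to `q`,
i.e. the vertices of the `(r,n)`-hypersimplex translated by `q·𝟙`; there are
`C(n,r)` of them. -/
theorem core_points_of_one_layer
    (n : ℕ) (hn : 0 < n) (q : ℤ) (r : ℕ) (hr : r < n) (k : ℤ) (hk : k = q * n + r)
    (Core : Set (Fin n → ℤ))
    (hCore : Core = {x | (∑ i, x i) = k ∧
        ∀ y : Fin n → ℤ, (∑ i, y i) = k →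
          ∑ i, ((x i : ℝ) - (k : ℝ) / (n : ℝ)) ^ 2
            ≤ ∑ i, ((y i : ℝ) - (k : ℝ) / (n : ℝ)) ^ 2}) :
    Core = {x | ∃ S : Finset (Fin n), S.card = r ∧
        x = fun i => q + if i ∈ S then 1 else 0} ∧
    Core.ncard = Nat.choose n r :=
  core_points_of_one_layer_general n q r hr k hk Core hCore
end

section
/- Suppose Γ ≤ Sym(ILP(A,b,1)) acts (⌊n/2⌋+1)-transitively on the standard basis of R^n, n ≥ 2. Then for each k, either every core point in the k-th 1-layer is feasible for Ax ≤ b, or the layer H_{1,k} contains no feasible integral point at all. -/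
open Matrix

lemma signed_perm {n : ℕ} (γ : GL (Fin n) ℝ)
    (hs : ∀ v : Fin n → ℝ,
        (∃ i : Fin n, v = Pi.single i 1 ∨ v = -Pi.single i 1) →
        ∃ j : Fin n, γ.val.mulVec v = Pi.single j 1 ∨ γ.val.mulVec v = -Pi.single j 1) :
    ∃ (π : Equiv.Perm (Fin n)) (ε : Fin n → ℝ),
      (∀ l, ε l = 1 ∨ ε l = -1) ∧
      (∀ (v : Fin n → ℝ) (l : Fin n), γ.val.mulVec v l = ε l * v (π l)) := by
  have H : ∀ i : Fin n, ∃ js : (Fin n) × ℝ, (js.2 = 1 ∨ js.2 = -1) ∧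
      γ.val.mulVec (Pi.single i 1) = js.2 • (Pi.single js.1 1 : Fin n → ℝ) := by
    intro i
    obtain ⟨j, h | h⟩ := hs _ ⟨i, Or.inl rfl⟩
    · exact ⟨(j, 1), Or.inl rfl, by simp [h]⟩
    · exact ⟨(j, -1), Or.inr rfl, by simp [h]⟩
  choose cs hs1 hcol using H
  set c : Fin n → Fin n := fun i => (cs i).1 with hc
  set s : Fin n → ℝ := fun i => (cs i).2 with hsdef
  have hinj : Function.Injective (γ.val.mulVec) := by
    intro u v huv
    have h2 := congrArg ((γ⁻¹).val.mulVec) huv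
    rw [Matrix.mulVec_mulVec, Matrix.mulVec_mulVec, γ.inv_mul] at h2
    simpa using h2
  have hsne : ∀ i, s i ≠ 0 := by
    intro i; rcases hs1 i with h | h <;> rw [show (cs i).2 = s i from rfl] at h <;>
      rw [h] <;> norm_num
  have cinj : Function.Injective c := by
    intro i i' h
    by_contra hne
    have e1 : γ.val.mulVec (s i' • (Pi.single i 1 : Fin n → ℝ)) =
        γ.val.mulVec (s i • (Pi.single i' 1 : Fin n → ℝ)) := by
      rw [Matrix.mulVec_smul, Matrix.mulVec_smul, hcol, hcol]
      show s i' • s i • (Pi.single (c i) 1 : Fin n → ℝ) = s i • s i' • (Pi.single (c i') 1 : Fin n → ℝ)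
      rw [h, smul_comm]
    have e2 := hinj e1
    have e3 := congrFun e2 i
    simp only [Pi.smul_apply, Pi.single_eq_same, smul_eq_mul, mul_one] at e3
    rw [Pi.single_eq_of_ne hne] at e3
    simp only [smul_eq_mul, mul_zero] at e3
    exact hsne i' e3
  have cbij : Function.Bijective c := Finite.injective_iff_bijective.1 cinj
  set ce := Equiv.ofBijective c cbij with hce
  refine ⟨ce.symm, fun l => s (ce.symm l), fun l => hs1 _, ?_⟩
  intro v l
  have hcol' : ∀ l m, γ.val l m = s m * (Pi.single (c m) 1 : Fin n → ℝ) l := by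
    intro l m
    have h1 := congrFun (hcol m) l
    rw [Matrix.mulVec_single] at h1
    simpa using h1
  have : γ.val.mulVec v l = ∑ m, (s m * (Pi.single (c m) 1 : Fin n → ℝ) l) * v m := by
    simp only [Matrix.mulVec, dotProduct]
    exact Finset.sum_congr rfl fun m _ => by rw [hcol' l m]
  rw [this]
  rw [Finset.sum_eq_single (ce.symm l)]
  · have hcel : c (ce.symm l) = l := ce.apply_symm_apply l
    rw [hcel, Pi.single_eq_same, mul_one]
  · intro m _ hm
    have : c m ≠ l := by
      intro h
      apply hm
      have : ce m = l := h
      rw [← this]; exact (ce.symm_apply_apply m).symm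
    rw [Pi.single_eq_of_ne (Ne.symm this)]
    ring
  · intro h; exact absurd (Finset.mem_univ _) h

lemma exists_gamma {n : ℕ} (hn : 2 ≤ n) (Γ : Subgroup (GL (Fin n) ℝ))
    (htrans : ∀ f g : Fin (n / 2 + 1) ↪ Fin n, ∃ γ ∈ Γ, ∀ a : Fin (n / 2 + 1),
        γ.val.mulVec (Pi.single (f a) 1) = Pi.single (g a) 1)
    (τ : Equiv.Perm (Fin n)) (B : Finset (Fin n)) (hB : B.card ≤ n / 2 + 1) :
    ∃ γ ∈ Γ, ∀ i ∈ B, γ.val.mulVec (Pi.single i 1) = Pi.single (τ i) 1 := by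
  have hcu : n / 2 + 1 ≤ (Finset.univ : Finset (Fin n)).card := by
    rw [Finset.card_univ, Fintype.card_fin]; omega
  obtain ⟨B', hBB', _, hB'⟩ := Finset.exists_subsuperset_card_eq B.subset_univ hB hcu
  set f : Fin (n / 2 + 1) ↪ Fin n :=
    ⟨fun a => (B'.orderIsoOfFin hB' a : Fin n),
      fun a a' h => (B'.orderIsoOfFin hB').injective (Subtype.coe_injective h)⟩ with hf
  obtain ⟨γ, hγ, hpre⟩ := htrans f (f.trans τ.toEmbedding)
  refine ⟨γ, hγ, fun i hi => ?_⟩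
  have hiB' : i ∈ B' := hBB' hi
  have : f ((B'.orderIsoOfFin hB').symm ⟨i, hiB'⟩) = i := by
    show ((B'.orderIsoOfFin hB') ((B'.orderIsoOfFin hB').symm ⟨i, hiB'⟩) : Fin n) = i
    rw [OrderIso.apply_symm_apply]
  have h2 := hpre ((B'.orderIsoOfFin hB').symm ⟨i, hiB'⟩)
  simp only [Function.Embedding.trans_apply, Equiv.coe_toEmbedding] at h2
  rw [this] at h2
  exact h2

lemma presc_facts {n : ℕ} (γ : GL (Fin n) ℝ) (π : Equiv.Perm (Fin n)) (ε : Fin n → ℝ)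
    (hform : ∀ (v : Fin n → ℝ) (l : Fin n), γ.val.mulVec v l = ε l * v (π l))
    (i j : Fin n) (h : γ.val.mulVec (Pi.single i 1) = Pi.single j 1) :
    π j = i ∧ ε j = 1 := by
  have h1 := congrFun h j
  rw [hform] at h1
  rw [Pi.single_eq_same] at h1
  by_cases hp : π j = i
  · rw [hp, Pi.single_eq_same, mul_one] at h1
    exact ⟨hp, h1⟩
  · rw [Pi.single_eq_of_ne hp, mul_zero] at h1
    exact absurd h1.symm one_ne_zero

lemma convex_mem {m n : ℕ} (A : Matrix (Fin m) (Fin n) ℝ) (b : Fin m → ℝ)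
    {x y : Fin n → ℝ} (hx : x ∈ {x | A.mulVec x ≤ b}) (hy : y ∈ {x | A.mulVec x ≤ b})
    (t : ℝ) (h0 : 0 ≤ t) (h1 : t ≤ 1) :
    (fun l => t * x l + (1 - t) * y l) ∈ {x | A.mulVec x ≤ b} := by
  simp only [Set.mem_setOf_eq] at *
  have key : A.mulVec (fun l => t * x l + (1 - t) * y l)
      = fun r => t * A.mulVec x r + (1 - t) * A.mulVec y r := by
    funext r
    simp only [Matrix.mulVec, dotProduct]
    rw [Finset.mul_sum, Finset.mul_sum, ← Finset.sum_add_distrib]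
    exact Finset.sum_congr rfl fun l _ => by ring
  rw [key]
  intro r
  have hxr := hx r
  have hyr := hy r
  simp only
  nlinarith

lemma two_valued_transfer_aux {m n : ℕ} (hn : 2 ≤ n)
    (A : Matrix (Fin m) (Fin n) ℝ) (b : Fin m → ℝ)
    (P : Set (Fin n → ℝ))
    (Γ : Subgroup (GL (Fin n) ℝ))
    (hfeas : ∀ γ ∈ Γ, (fun x => γ.val.mulVec x) '' P = P)
    (hobj : ∀ γ ∈ Γ, ∀ x ∈ P,
        (fun _ : Fin n => (1 : ℝ)) ⬝ᵥ γ.val.mulVec x = (fun _ : Fin n => (1 : ℝ)) ⬝ᵥ x)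
    (hsigned : ∀ γ ∈ Γ, ∀ v : Fin n → ℝ,
        (∃ i : Fin n, v = Pi.single i 1 ∨ v = -Pi.single i 1) →
        ∃ j : Fin n, γ.val.mulVec v = Pi.single j 1 ∨ γ.val.mulVec v = -Pi.single j 1)
    (htrans : ∀ f g : Fin (n / 2 + 1) ↪ Fin n, ∃ γ ∈ Γ, ∀ a : Fin (n / 2 + 1),
        γ.val.mulVec (Pi.single (f a) 1) = Pi.single (g a) 1)
    (a bb : ℝ) (x y : Fin n → ℝ) (S T : Finset (Fin n))
    (hScard : S.card ≤ n / 2) (hST : S.card = T.card)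
    (hxb : ∀ l ∈ S, x l = bb) (hxa : ∀ l ∉ S, x l = a)
    (hyb : ∀ l ∈ T, y l = bb) (hya : ∀ l ∉ T, y l = a)
    (hx : x ∈ P) : y ∈ P := by
  classical
  set e : {l : Fin n // l ∈ S} ≃ {l : Fin n // l ∈ T} := Finset.equivOfCardEq hST with he
  set τ : Equiv.Perm (Fin n) := e.extendSubtype with hτ
  have hτS : ∀ i ∈ S, τ i ∈ T := fun i hi => e.extendSubtype_mem i hi
  obtain ⟨γ, hγ, hpre⟩ := exists_gamma hn Γ htrans τ S (by omega)
  obtain ⟨π, ε, hε, hform⟩ := signed_perm γ (hsigned γ hγ)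
  have hfacts : ∀ i ∈ S, π (τ i) = i ∧ ε (τ i) = 1 :=
    fun i hi => presc_facts γ π ε hform i (τ i) (hpre i hi)
  set Z : Fin n → ℝ := γ.val.mulVec x with hZ
  have hZP : Z ∈ P := by
    rw [← hfeas γ hγ]; exact ⟨x, hx, rfl⟩
  have hZsum : ∑ l, Z l = ∑ l, x l := by
    have := hobj γ hγ x hx
    simpa [dotProduct] using this
  have himg : S.image τ = T := by
    apply Finset.eq_of_subset_of_card_le
    · intro l hl
      obtain ⟨i, hi, rfl⟩ := Finset.mem_image.1 hl
      exact hτS i hi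
    · rw [Finset.card_image_of_injective _ τ.injective, ← hST]
  have hZb : ∀ l ∈ T, Z l = bb := by
    intro l hl
    rw [← himg] at hl
    obtain ⟨i, hi, rfl⟩ := Finset.mem_image.1 hl
    rw [hZ]
    show γ.val.mulVec x (τ i) = bb
    rw [hform, (hfacts i hi).1, (hfacts i hi).2, one_mul]
    exact hxb i hi
  have hπT : ∀ l, l ∉ T → π l ∉ S := by
    intro l hl hπl
    have h1 := (hfacts (π l) hπl).1
    have h2 : τ (π l) = l := π.injective h1
    exact hl (h2 ▸ hτS (π l) hπl)
  have hZe : ∀ l, l ∉ T → Z l = ε l * a := by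
    intro l hl
    rw [hZ]
    show γ.val.mulVec x l = ε l * a
    rw [hform, hxa _ (hπT l hl)]
  have hZa : ∀ l, l ∉ T → Z l = a := by
    by_cases ha : a = 0
    · intro l hl; rw [hZe l hl, ha, mul_zero]
    · -- sum argument
      have hsx : ∑ l, x l = T.card * bb + (Finset.univ \ T).card * a := by
        rw [← Finset.sum_sdiff (Finset.subset_univ S)]
        rw [Finset.sum_congr rfl (fun l hl => hxa l (Finset.mem_sdiff.1 hl).2),
          Finset.sum_congr rfl (fun l hl => hxb l (by exact hl))]
        rw [Finset.sum_const, Finset.sum_const, nsmul_eq_mul, nsmul_eq_mul, ← hST]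
        have : (Finset.univ \ S).card = (Finset.univ \ T).card := by
          rw [Finset.card_sdiff_of_subset (Finset.subset_univ S),
            Finset.card_sdiff_of_subset (Finset.subset_univ T), hST]
        rw [this, add_comm]
      have hsz : ∑ l, Z l = T.card * bb + ∑ l ∈ Finset.univ \ T, ε l * a := by
        rw [← Finset.sum_sdiff (Finset.subset_univ T),
          Finset.sum_congr rfl (fun l hl => hZe l (Finset.mem_sdiff.1 hl).2),
          Finset.sum_congr rfl (fun l hl => hZb l (by exact hl)),
          Finset.sum_const, nsmul_eq_mul, add_comm]
      have hεsum : ∑ l ∈ Finset.univ \ T, ε l = (Finset.univ \ T).card := by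
        have h1 : (∑ l ∈ Finset.univ \ T, ε l) * a = ((Finset.univ \ T).card : ℝ) * a := by
          rw [Finset.sum_mul]
          have := hZsum
          rw [hsz, hsx] at this
          linarith
        exact mul_right_cancel₀ ha h1
      have hall : ∀ l ∈ Finset.univ \ T, (1 : ℝ) - ε l = 0 := by
        apply (Finset.sum_eq_zero_iff_of_nonneg ?_).1
        · rw [Finset.sum_sub_distrib, hεsum, Finset.sum_const, nsmul_eq_mul, mul_one, sub_self]
        · intro l _
          rcases hε l with h | h <;> rw [h] <;> norm_num
      intro l hl
      have : ε l = 1 := by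
        have := hall l (Finset.mem_sdiff.2 ⟨Finset.mem_univ l, hl⟩)
        linarith
      rw [hZe l hl, this, one_mul]
  have : y = Z := by
    funext l
    by_cases hl : l ∈ T
    · rw [hyb l hl, hZb l hl]
    · rw [hya l hl, hZa l hl]
  rw [this]
  exact hZP

lemma two_valued_transfer {m n : ℕ} (hn : 2 ≤ n)
    (A : Matrix (Fin m) (Fin n) ℝ) (b : Fin m → ℝ)
    (P : Set (Fin n → ℝ))
    (Γ : Subgroup (GL (Fin n) ℝ))
    (hfeas : ∀ γ ∈ Γ, (fun x => γ.val.mulVec x) '' P = P)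
    (hobj : ∀ γ ∈ Γ, ∀ x ∈ P,
        (fun _ : Fin n => (1 : ℝ)) ⬝ᵥ γ.val.mulVec x = (fun _ : Fin n => (1 : ℝ)) ⬝ᵥ x)
    (hsigned : ∀ γ ∈ Γ, ∀ v : Fin n → ℝ,
        (∃ i : Fin n, v = Pi.single i 1 ∨ v = -Pi.single i 1) →
        ∃ j : Fin n, γ.val.mulVec v = Pi.single j 1 ∨ γ.val.mulVec v = -Pi.single j 1)
    (htrans : ∀ f g : Fin (n / 2 + 1) ↪ Fin n, ∃ γ ∈ Γ, ∀ a : Fin (n / 2 + 1),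
        γ.val.mulVec (Pi.single (f a) 1) = Pi.single (g a) 1)
    (a bb : ℝ) (x y : Fin n → ℝ) (S T : Finset (Fin n))
    (hST : S.card = T.card)
    (hxb : ∀ l ∈ S, x l = bb) (hxa : ∀ l ∉ S, x l = a)
    (hyb : ∀ l ∈ T, y l = bb) (hya : ∀ l ∉ T, y l = a)
    (hx : x ∈ P) : y ∈ P := by
  by_cases hc : S.card ≤ n / 2
  · exact two_valued_transfer_aux hn A b P Γ hfeas hobj hsigned htrans a bb x y S T
      hc hST hxb hxa hyb hya hx
  · have hSu : S.card ≤ n := by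
      have := Finset.card_le_univ S
      simpa using this
    have hTu : T.card ≤ n := by
      have := Finset.card_le_univ T
      simpa using this
    have hc1 : (Finset.univ \ S).card ≤ n / 2 := by
      rw [Finset.card_sdiff_of_subset (Finset.subset_univ S)]
      simp only [Finset.card_univ, Fintype.card_fin]
      omega
    have hc2 : (Finset.univ \ S).card = (Finset.univ \ T).card := by
      rw [Finset.card_sdiff_of_subset (Finset.subset_univ S), Finset.card_sdiff_of_subset (Finset.subset_univ T),
        Finset.card_univ, hST]
    exact two_valued_transfer_aux hn A b P Γ hfeas hobj hsigned htrans bb a x y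
      (Finset.univ \ S) (Finset.univ \ T) hc1 hc2
      (fun l hl => hxa l (Finset.mem_sdiff.1 hl).2)
      (fun l hl => hxb l (by simpa using hl))
      (fun l hl => hya l (Finset.mem_sdiff.1 hl).2)
      (fun l hl => hyb l (by simpa using hl))
      hx

lemma sum_sq_center {n : ℕ} (u : Fin n → ℝ) (c : ℝ) :
    ∑ l, (u l - c) ^ 2 = ∑ l, (u l) ^ 2 - 2 * c * ∑ l, u l + n * c ^ 2 := by
  have h1 : ∀ l : Fin n, (u l - c) ^ 2 = (u l) ^ 2 - 2 * c * u l + c ^ 2 := fun l => by ring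
  rw [Finset.sum_congr rfl (fun l _ => h1 l)]
  rw [Finset.sum_add_distrib, Finset.sum_sub_distrib, ← Finset.mul_sum,
    Finset.sum_const, Finset.card_univ, Fintype.card_fin, nsmul_eq_mul]

lemma parity_descent {m n : ℕ} (hn : 2 ≤ n)
    (A : Matrix (Fin m) (Fin n) ℝ) (b : Fin m → ℝ)
    (P : Set (Fin n → ℝ)) (hP : P = {x | A.mulVec x ≤ b})
    (Γ : Subgroup (GL (Fin n) ℝ))
    (hfeas : ∀ γ ∈ Γ, (fun x => γ.val.mulVec x) '' P = P)
    (hobj : ∀ γ ∈ Γ, ∀ x ∈ P,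
        (fun _ : Fin n => (1 : ℝ)) ⬝ᵥ γ.val.mulVec x = (fun _ : Fin n => (1 : ℝ)) ⬝ᵥ x)
    (hsigned : ∀ γ ∈ Γ, ∀ v : Fin n → ℝ,
        (∃ i : Fin n, v = Pi.single i 1 ∨ v = -Pi.single i 1) →
        ∃ j : Fin n, γ.val.mulVec v = Pi.single j 1 ∨ γ.val.mulVec v = -Pi.single j 1)
    (htrans : ∀ f g : Fin (n / 2 + 1) ↪ Fin n, ∃ γ ∈ Γ, ∀ a : Fin (n / 2 + 1),
        γ.val.mulVec (Pi.single (f a) 1) = Pi.single (g a) 1)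
    (x : Fin n → ℤ) (hx : (fun l => (x l : ℝ)) ∈ P)
    (i j : Fin n) (hij : x j + 2 ≤ x i) (hpar : x i % 2 = x j % 2)
    (B : Finset (Fin n)) (hiB : i ∈ B) (hjB : j ∈ B) (hBcard : B.card ≤ n / 2 + 1)
    (hBc : ∀ l, l ∉ B → ∀ l', l' ∉ B → x l % 2 = x l' % 2)
    (c : ℝ) :
    ∃ z : Fin n → ℤ, (fun l => (z l : ℝ)) ∈ P ∧ (∑ l, z l) = ∑ l, x l ∧
      ∑ l, ((z l : ℝ) - c) ^ 2 + 1 ≤ ∑ l, ((x l : ℝ) - c) ^ 2 := by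
  classical
  have hijne : i ≠ j := by intro h; rw [h] at hij; omega
  set τ : Equiv.Perm (Fin n) := Equiv.swap i j with hτdef
  have hτB : ∀ l ∈ B, τ l ∈ B := by
    intro l hl
    rcases eq_or_ne l i with rfl | hli
    · rw [hτdef, Equiv.swap_apply_left]; exact hjB
    rcases eq_or_ne l j with rfl | hlj
    · rw [hτdef, Equiv.swap_apply_right]; exact hiB
    · rw [hτdef, Equiv.swap_apply_of_ne_of_ne hli hlj]; exact hl
  obtain ⟨γ, hγ, hpre⟩ := exists_gamma hn Γ htrans τ B hBcard
  obtain ⟨π, ε, hε, hform⟩ := signed_perm γ (hsigned γ hγ)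
  have hfacts : ∀ l ∈ B, π (τ l) = l ∧ ε (τ l) = 1 :=
    fun l hl => presc_facts γ π ε hform l (τ l) (hpre l hl)
  set X : Fin n → ℝ := fun l => (x l : ℝ) with hXdef
  set W : Fin n → ℝ := γ.val.mulVec X with hWdef
  have hWP : W ∈ P := by rw [← hfeas γ hγ]; exact ⟨X, hx, rfl⟩
  have hW : ∀ l, W l = ε l * X (π l) := fun l => hform X l
  have hWsum : ∑ l, W l = ∑ l, X l := by
    have := hobj γ hγ X hx
    simpa [dotProduct] using this
  have hWsq : ∑ l, (W l) ^ 2 = ∑ l, (X l) ^ 2 := by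
    have h1 : ∀ l, (W l) ^ 2 = (X (π l)) ^ 2 := by
      intro l
      rw [hW l]
      rcases hε l with h | h <;> rw [h] <;> ring
    rw [Finset.sum_congr rfl (fun l _ => h1 l)]
    exact Equiv.sum_comp π (fun l => (X l) ^ 2)
  have hππ : ∀ l ∈ B, π l = τ l := by
    intro l hl
    have h1 := (hfacts (τ l) (hτB l hl)).1
    rw [show τ (τ l) = l from Equiv.swap_apply_self i j l] at h1
    exact h1
  have hπBc : ∀ l, l ∉ B → π l ∉ B := by
    intro l hl hπl
    have h1 := (hfacts (π l) hπl).1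
    have h2 : τ (π l) = l := π.injective h1
    exact hl (h2 ▸ hτB (π l) hπl)
  have hparall : ∀ l, x l % 2 = x (π l) % 2 := by
    intro l
    by_cases hl : l ∈ B
    · rw [hππ l hl]
      rcases eq_or_ne l i with rfl | hli
      · rw [hτdef, Equiv.swap_apply_left]; omega
      rcases eq_or_ne l j with rfl | hlj
      · rw [hτdef, Equiv.swap_apply_right]; omega
      · rw [hτdef, Equiv.swap_apply_of_ne_of_ne hli hlj]
    · exact hBc l hl (π l) (hπBc l hl)
  set w : Fin n → ℤ := fun l => if ε l = 1 then x (π l) else -(x (π l)) with hwdef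
  have hw : ∀ l, (w l : ℝ) = W l := by
    intro l
    show ((if ε l = 1 then x (π l) else -x (π l) : ℤ) : ℝ) = W l
    rcases hε l with h | h
    · rw [if_pos h, hW l, h, one_mul]
    · have hne : ε l ≠ 1 := by rw [h]; norm_num
      rw [if_neg hne, hW l, h]
      push_cast
      ring
  have hzpar : ∀ l, (x l + w l) % 2 = 0 := by
    intro l
    have h1 := hparall l
    have : w l = x (π l) ∨ w l = -(x (π l)) := by
      rw [hwdef]; by_cases h : ε l = 1 <;> simp [h]
    omega
  set z : Fin n → ℤ := fun l => (x l + w l) / 2 with hzdef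
  have hz2 : ∀ l, 2 * z l = x l + w l := by
    intro l
    have := hzpar l
    show 2 * ((x l + w l) / 2) = x l + w l
    omega
  have hZ : ∀ l, (z l : ℝ) = (X l + W l) / 2 := by
    intro l
    have h1 := hz2 l
    have h2 : (2 : ℝ) * (z l : ℝ) = (x l : ℝ) + (w l : ℝ) := by exact_mod_cast congrArg (Int.cast : ℤ → ℝ) h1
    rw [hw l] at h2
    rw [hXdef]
    simp only
    linarith
  have hzP : (fun l => (z l : ℝ)) ∈ P := by
    have heq : (fun l => (z l : ℝ)) = fun l => (1/2 : ℝ) * X l + (1 - 1/2) * W l := by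
      funext l
      rw [hZ l]
      ring
    rw [heq, hP]
    rw [hP] at hx hWP
    exact convex_mem A b hx hWP (1/2) (by norm_num) (by norm_num)
  have hsw : ∑ l, w l = ∑ l, x l := by
    have h1 : ((∑ l, w l : ℤ) : ℝ) = ((∑ l, x l : ℤ) : ℝ) := by
      push_cast
      rw [Finset.sum_congr rfl (fun l _ => hw l)]
      exact hWsum
    exact_mod_cast h1
  have hsz : ∑ l, z l = ∑ l, x l := by
    have h1 : 2 * ∑ l, z l = ∑ l, (2 * z l) := Finset.mul_sum _ _ _
    rw [Finset.sum_congr rfl (fun l _ => hz2 l), Finset.sum_add_distrib, hsw] at h1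
    omega
  refine ⟨z, hzP, hsz, ?_⟩
  have hkey : ∀ l, ((z l : ℝ) - c) ^ 2
      = ((X l - c) ^ 2 + (W l - c) ^ 2) / 2 - (X l - W l) ^ 2 / 4 := by
    intro l
    rw [hZ l]
    ring
  have hWc : ∑ l, (W l - c) ^ 2 = ∑ l, (X l - c) ^ 2 := by
    rw [sum_sq_center, sum_sq_center, hWsq, hWsum]
  have hXW : (4 : ℝ) ≤ ∑ l, (X l - W l) ^ 2 := by
    have hWj : W j = X i := by
      have h1 := hW j
      have h2 : τ i = j := Equiv.swap_apply_left i j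
      rw [← h2] at h1 ⊢
      rw [h1, (hfacts i hiB).1, (hfacts i hiB).2, one_mul]
    have h3 : (4 : ℝ) ≤ (X j - W j) ^ 2 := by
      rw [hWj, hXdef]
      simp only
      have : (x j : ℝ) + 2 ≤ (x i : ℝ) := by exact_mod_cast hij
      nlinarith
    calc (4 : ℝ) ≤ (X j - W j) ^ 2 := h3
      _ ≤ ∑ l, (X l - W l) ^ 2 :=
        Finset.single_le_sum (f := fun l => (X l - W l) ^ 2)
          (fun l _ => sq_nonneg _) (Finset.mem_univ j)
  calc ∑ l, ((z l : ℝ) - c) ^ 2 + 1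
      = (∑ l, (X l - c) ^ 2 + ∑ l, (W l - c) ^ 2) / 2 - (∑ l, (X l - W l) ^ 2) / 4 + 1 := by
        rw [Finset.sum_congr rfl (fun l _ => hkey l), Finset.sum_sub_distrib,
          ← Finset.sum_div, ← Finset.sum_div, Finset.sum_add_distrib]
    _ ≤ ∑ l, (X l - c) ^ 2 := by
        rw [hWc]
        linarith

lemma sum_support_pair {n : ℕ} {M : Type*} [AddCommMonoid M] (F : Fin n → M) (i j : Fin n)
    (hij : i ≠ j) (h : ∀ l, l ≠ i → l ≠ j → F l = 0) : ∑ l, F l = F i + F j := by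
  classical
  rw [← Finset.sum_subset (Finset.subset_univ ({i, j} : Finset (Fin n)))
    (fun l _ hl => by
      simp only [Finset.mem_insert, Finset.mem_singleton] at hl
      push_neg at hl
      exact h l hl.1 hl.2)]
  rw [Finset.sum_pair hij]

lemma unit_move {n : ℕ} (x : Fin n → ℤ) (i j : Fin n) (hij : x j + 2 ≤ x i) (c : ℝ) :
    ∃ w : Fin n → ℤ, (∑ l, w l) = ∑ l, x l ∧
      ∑ l, ((w l : ℝ) - c) ^ 2 + 2 ≤ ∑ l, ((x l : ℝ) - c) ^ 2 ∧
      w i = x i - 1 ∧ w j = x j + 1 ∧ ∀ l, l ≠ i → l ≠ j → w l = x l := by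
  have hne : i ≠ j := by intro h; rw [h] at hij; omega
  set w : Fin n → ℤ := fun l => if l = i then x i - 1 else if l = j then x j + 1 else x l
    with hwdef
  have hwi : w i = x i - 1 := by simp [hwdef]
  have hwj : w j = x j + 1 := by simp [hwdef, Ne.symm hne]
  have hwo : ∀ l, l ≠ i → l ≠ j → w l = x l := by
    intro l h1 h2; simp [hwdef, h1, h2]
  have hsum : ∑ l, w l = ∑ l, x l := by
    have h1 : ∑ l, (w l - x l) = (w i - x i) + (w j - x j) :=
      sum_support_pair _ i j hne (fun l h1 h2 => by rw [hwo l h1 h2]; ring)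
    rw [Finset.sum_sub_distrib] at h1
    rw [hwi, hwj] at h1
    omega
  refine ⟨w, hsum, ?_, hwi, hwj, hwo⟩
  have h1 : ∑ l, (((w l : ℝ) - c) ^ 2 - ((x l : ℝ) - c) ^ 2)
      = (((w i : ℝ) - c) ^ 2 - ((x i : ℝ) - c) ^ 2)
        + (((w j : ℝ) - c) ^ 2 - ((x j : ℝ) - c) ^ 2) :=
    sum_support_pair _ i j hne (fun l hl1 hl2 => by rw [hwo l hl1 hl2]; ring)
  rw [Finset.sum_sub_distrib] at h1
  rw [hwi, hwj] at h1
  have hijr : (x j : ℝ) + 2 ≤ (x i : ℝ) := by exact_mod_cast hij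
  push_cast at h1
  nlinarith [h1]

lemma flat_shape {n : ℕ} (hn : 1 ≤ n) (x : Fin n → ℤ) (hflat : ∀ i j, x i ≤ x j + 1) :
    ∃ (a : ℤ) (S : Finset (Fin n)), S.card < n ∧ (∀ l ∈ S, x l = a + 1) ∧
      (∀ l ∉ S, x l = a) ∧ ∑ l, x l = n * a + S.card := by
  classical
  have hne : (Finset.univ : Finset (Fin n)).Nonempty := by
    rw [Finset.univ_nonempty_iff]
    exact ⟨⟨0, by omega⟩⟩
  obtain ⟨l₀, _, hmin⟩ := Finset.exists_min_image Finset.univ x hne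
  set a := x l₀ with ha
  set S := Finset.univ.filter (fun l => x l = a + 1) with hS
  have hSb : ∀ l ∈ S, x l = a + 1 := fun l hl => (Finset.mem_filter.1 hl).2
  have hSa : ∀ l ∉ S, x l = a := by
    intro l hl
    have h1 : x l ≠ a + 1 := by
      intro h
      exact hl (Finset.mem_filter.2 ⟨Finset.mem_univ l, h⟩)
    have h2 := hmin l (Finset.mem_univ l)
    have h3 := hflat l l₀
    omega
  have hl₀S : l₀ ∉ S := by
    intro h
    have := hSb l₀ h
    omega
  have hSle : S.card ≤ n := by simpa using Finset.card_le_univ S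
  have hcard : S.card < n := by
    by_contra h
    push_neg at h
    have hcu : S.card = (Finset.univ : Finset (Fin n)).card := by
      rw [Finset.card_univ, Fintype.card_fin]
      omega
    exact hl₀S (Finset.eq_univ_of_card S hcu ▸ Finset.mem_univ l₀)
  refine ⟨a, S, hcard, hSb, hSa, ?_⟩
  rw [← Finset.sum_sdiff (Finset.subset_univ S),
    Finset.sum_congr rfl (fun l hl => hSa l (Finset.mem_sdiff.1 hl).2),
    Finset.sum_congr rfl (fun l hl => hSb l (by exact hl)),
    Finset.sum_const, Finset.sum_const, nsmul_eq_mul, nsmul_eq_mul,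
    Finset.card_sdiff_of_subset (Finset.subset_univ S), Finset.card_univ, Fintype.card_fin]
  push_cast [hSle]
  ring

/-- Suppose `Γ ≤ Sym(ILP(A,b,𝟙))` (signed permutation automorphisms of the
linear program with all-ones objective and bounded feasible region) acts
`(⌊n/2⌋+1)`-transitively on the standard basis of `ℝⁿ`, `n ≥ 2`.  Then for each
`k`, either every core point of the `k`-th `𝟙`-layer (integral point of the
layer minimizing Euclidean distance to its center) is feasible, or the layer
contains no feasible integral point at all. -/
theorem core_points_feasible_or_layer_infeasible
    (m n : ℕ) (hn : 2 ≤ n)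
    (A : Matrix (Fin m) (Fin n) ℝ) (b : Fin m → ℝ)
    (P : Set (Fin n → ℝ)) (hP : P = {x | A.mulVec x ≤ b})
    (hbdd : Bornology.IsBounded P)
    (Γ : Subgroup (GL (Fin n) ℝ))
    (hfeas : ∀ γ ∈ Γ, (fun x => γ.val.mulVec x) '' P = P)
    (hobj : ∀ γ ∈ Γ, ∀ x ∈ P,
        (fun _ : Fin n => (1 : ℝ)) ⬝ᵥ γ.val.mulVec x = (fun _ : Fin n => (1 : ℝ)) ⬝ᵥ x)
    (hsigned : ∀ γ ∈ Γ, ∀ v : Fin n → ℝ,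
        (∃ i : Fin n, v = Pi.single i 1 ∨ v = -Pi.single i 1) →
        ∃ j : Fin n, γ.val.mulVec v = Pi.single j 1 ∨ γ.val.mulVec v = -Pi.single j 1)
    (htrans : ∀ f g : Fin (n / 2 + 1) ↪ Fin n, ∃ γ ∈ Γ, ∀ a : Fin (n / 2 + 1),
        γ.val.mulVec (Pi.single (f a) 1) = Pi.single (g a) 1) :
    ∀ k : ℤ,
      (∃ x : Fin n → ℤ, (fun i => (x i : ℝ)) ∈ P ∧ (∑ i, x i) = k) →
      ∀ y : Fin n → ℤ,
        ((∑ i, y i) = k ∧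
          ∀ w : Fin n → ℤ, (∑ i, w i) = k →
            ∑ i, ((y i : ℝ) - (k : ℝ) / (n : ℝ)) ^ 2
              ≤ ∑ i, ((w i : ℝ) - (k : ℝ) / (n : ℝ)) ^ 2) →
        (fun i => (y i : ℝ)) ∈ P := by
  classical
  intro k hk y hy
  obtain ⟨x₀, hx₀P, hx₀sum⟩ := hk
  obtain ⟨hysum, hymin⟩ := hy
  set c : ℝ := (k : ℝ) / (n : ℝ) with hc
  -- the set of feasible integral points of the layer
  set F : Set (Fin n → ℤ) := {v | (fun l => (v l : ℝ)) ∈ P ∧ ∑ l, v l = k} with hF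
  obtain ⟨R, hR⟩ := hbdd.exists_norm_le
  have hFfin : F.Finite := by
    apply Set.Finite.subset
      (Set.Finite.pi (fun l : Fin n => Set.finite_Icc (-(⌈R⌉)) ⌈R⌉))
    intro v hv
    rw [Set.mem_univ_pi]
    intro l
    have h1 := hR _ hv.1
    have h2 : |(v l : ℝ)| ≤ R := by
      have h3 := le_trans (norm_le_pi_norm (fun l => ((v l : ℝ))) l) h1
      simpa using h3
    rw [abs_le] at h2
    have hub : (v l : ℝ) ≤ (⌈R⌉ : ℝ) := le_trans h2.2 (Int.le_ceil R)
    have hlb : (-(⌈R⌉) : ℝ) ≤ (v l : ℝ) := by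
      have := Int.le_ceil R
      linarith [h2.1]
    rw [Set.mem_Icc]
    constructor
    · exact_mod_cast hlb
    · exact_mod_cast hub
  have hx₀F : x₀ ∈ F := ⟨hx₀P, hx₀sum⟩
  have hne : hFfin.toFinset.Nonempty := ⟨x₀, hFfin.mem_toFinset.2 hx₀F⟩
  obtain ⟨xs, hxsF0, hxsmin0⟩ :=
    Finset.exists_min_image hFfin.toFinset (fun v => ∑ l, ((v l : ℝ) - c) ^ 2) hne
  have hxsF : xs ∈ F := hFfin.mem_toFinset.1 hxsF0
  have hminF : ∀ v ∈ F, ∑ l, ((xs l : ℝ) - c) ^ 2 ≤ ∑ l, ((v l : ℝ) - c) ^ 2 :=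
    fun v hv => hxsmin0 v (hFfin.mem_toFinset.2 hv)
  have hxsP : (fun l => (xs l : ℝ)) ∈ P := hxsF.1
  have hxssum : ∑ l, xs l = k := hxsF.2
  -- the minimizer is flat
  have hflat : ∀ i j, xs i ≤ xs j + 1 := by
    by_contra hcon
    push_neg at hcon
    obtain ⟨i, j, hij⟩ := hcon
    have hij2 : xs j + 2 ≤ xs i := by omega
    by_cases hcase : ∃ p q : Fin n, xs q + 2 ≤ xs p ∧ xs p % 2 = xs q % 2
    · -- same-parity gap : parity descent
      obtain ⟨p, q, hpq, hpar⟩ := hcase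
      set C1 : Finset (Fin n) := Finset.univ.filter (fun l => xs l % 2 = xs p % 2) with hC1
      have hpC1 : p ∈ C1 := Finset.mem_filter.2 ⟨Finset.mem_univ p, rfl⟩
      have hqC1 : q ∈ C1 := Finset.mem_filter.2 ⟨Finset.mem_univ q, hpar.symm⟩
      have hU : ∃ U : Finset (Fin n), U.card = n - (n / 2 + 1) ∧ p ∉ U ∧ q ∉ U ∧
          (∀ l ∈ U, ∀ l' ∈ U, xs l % 2 = xs l' % 2) := by
        by_cases hbig : n - (n / 2 + 1) ≤ (C1 \ {p, q}).card
        · obtain ⟨U, hUsub, hUcard⟩ := Finset.exists_subset_card_eq hbig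
          have hmem : ∀ l ∈ U, l ∈ C1 ∧ l ≠ p ∧ l ≠ q := by
            intro l hl
            have := hUsub hl
            rw [Finset.mem_sdiff, Finset.mem_insert, Finset.mem_singleton] at this
            push_neg at this
            exact ⟨this.1, this.2.1, this.2.2⟩
          refine ⟨U, hUcard, fun h => (hmem p h).2.1 rfl, fun h => (hmem q h).2.2 rfl, ?_⟩
          intro l hl l' hl'
          have h1 := (Finset.mem_filter.1 (hmem l hl).1).2
          have h2 := (Finset.mem_filter.1 (hmem l' hl').1).2
          omega
        · have hpq2 : ({p, q} : Finset (Fin n)).card ≤ 2 := by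
            apply le_trans (Finset.card_insert_le p {q})
            simp
          have e1 : C1.card ≤ (C1 \ {p, q}).card + ({p, q} : Finset (Fin n)).card :=
            Finset.card_le_card_sdiff_add_card
          have e2 : (Finset.univ \ C1).card = n - C1.card := by
            rw [Finset.card_sdiff_of_subset (Finset.subset_univ _), Finset.card_univ, Fintype.card_fin]
          have h2 : n - (n / 2 + 1) ≤ (Finset.univ \ C1).card := by omega
          obtain ⟨U, hUsub, hUcard⟩ := Finset.exists_subset_card_eq h2
          have hmem : ∀ l ∈ U, ¬(xs l % 2 = xs p % 2) := by
            intro l hl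
            have := hUsub hl
            rw [Finset.mem_sdiff] at this
            intro h
            exact this.2 (Finset.mem_filter.2 ⟨Finset.mem_univ l, h⟩)
          refine ⟨U, hUcard, ?_, ?_, ?_⟩
          · intro h; exact hmem p h rfl
          · intro h; exact hmem q h hpar.symm
          · intro l hl l' hl'
            have h1 := hmem l hl
            have h2 := hmem l' hl'
            omega
      obtain ⟨U, hUcard, hpU, hqU, hUpar⟩ := hU
      set B : Finset (Fin n) := Finset.univ \ U with hB
      have hpB : p ∈ B := Finset.mem_sdiff.2 ⟨Finset.mem_univ p, hpU⟩
      have hqB : q ∈ B := Finset.mem_sdiff.2 ⟨Finset.mem_univ q, hqU⟩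
      have hBcard : B.card ≤ n / 2 + 1 := by
        rw [hB, Finset.card_sdiff_of_subset (Finset.subset_univ _), Finset.card_univ, Fintype.card_fin,
          hUcard]
        omega
      have hBc : ∀ l, l ∉ B → ∀ l', l' ∉ B → xs l % 2 = xs l' % 2 := by
        intro l hl l' hl'
        rw [hB, Finset.mem_sdiff] at hl hl'
        push_neg at hl hl'
        exact hUpar l (hl (Finset.mem_univ l)) l' (hl' (Finset.mem_univ l'))
      obtain ⟨z, hzP, hzsum, hzlt⟩ := parity_descent hn A b P hP Γ hfeas hobj hsigned htrans
        xs hxsP p q hpq hpar B hpB hqB hBcard hBc c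
      have hzF : z ∈ F := ⟨hzP, by rw [hzsum]; exact hxssum⟩
      have := hminF z hzF
      linarith
    · -- two-valued situation
      push_neg at hcase
      set S : Finset (Fin n) := Finset.univ.filter (fun l => xs l = xs i) with hSdef
      have hiS : i ∈ S := Finset.mem_filter.2 ⟨Finset.mem_univ i, rfl⟩
      have hjS : j ∉ S := by
        intro h
        have := (Finset.mem_filter.1 h).2
        omega
      have hb : ∀ l ∈ S, xs l = xs i := fun l hl => (Finset.mem_filter.1 hl).2
      have ha : ∀ l, l ∉ S → xs l = xs j := by
        intro l hl
        have h1 : xs l ≠ xs i := fun h => hl (Finset.mem_filter.2 ⟨Finset.mem_univ l, h⟩)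
        have k1 : xs l % 2 ≠ xs i % 2 := by
          intro hp
          have c1 : ¬(xs i + 2 ≤ xs l) := fun h => hcase l i h hp
          have c2 : ¬(xs l + 2 ≤ xs i) := fun h => hcase i l h hp.symm
          omega
        have k2 : xs i % 2 ≠ xs j % 2 := hcase i j hij2
        have k3 : ¬(xs j + 2 ≤ xs l) := fun h => hcase l j h (by omega)
        have k4 : ¬(xs l + 2 ≤ xs j) := fun h => hcase j l h (by omega)
        omega
      set T : Finset (Fin n) := insert j (S.erase i) with hTdef
      have hjSe : j ∉ S.erase i := fun h => hjS (Finset.mem_of_mem_erase h)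
      have hScard : S.card = T.card := by
        rw [hTdef, Finset.card_insert_of_notMem hjSe, Finset.card_erase_of_mem hiS]
        have : 1 ≤ S.card := Finset.card_pos.2 ⟨i, hiS⟩
        omega
      set y' : Fin n → ℤ := fun l => if l = i then xs j else if l = j then xs i else xs l
        with hy'def
      have hijne : i ≠ j := by intro h; rw [h] at hij2; omega
      have hy'i : y' i = xs j := by simp [hy'def]
      have hy'j : y' j = xs i := by simp [hy'def, Ne.symm hijne]
      have hy'o : ∀ l, l ≠ i → l ≠ j → y' l = xs l := by
        intro l h1 h2; simp [hy'def, h1, h2]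
      have hy'b : ∀ l ∈ T, (y' l : ℝ) = (xs i : ℝ) := by
        intro l hl
        rw [hTdef, Finset.mem_insert] at hl
        rcases hl with rfl | hl
        · rw [hy'j]
        · have h1 : l ≠ i := Finset.ne_of_mem_erase hl
          have h2 : l ∈ S := Finset.mem_of_mem_erase hl
          have h3 : l ≠ j := by intro h; rw [h] at h2; exact hjS h2
          rw [hy'o l h1 h3, hb l h2]
      have hy'a : ∀ l, l ∉ T → (y' l : ℝ) = (xs j : ℝ) := by
        intro l hl
        rw [hTdef, Finset.mem_insert] at hl
        push_neg at hl
        rcases eq_or_ne l i with rfl | h1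
        · rw [hy'i]
        · have h2 : l ∉ S := by
            intro h
            exact hl.2 (Finset.mem_erase.2 ⟨h1, h⟩)
          rw [hy'o l h1 hl.1, ha l h2]
      have hY'P : (fun l => (y' l : ℝ)) ∈ P :=
        two_valued_transfer hn A b P Γ hfeas hobj hsigned htrans
          ((xs j : ℝ)) ((xs i : ℝ)) (fun l => (xs l : ℝ)) (fun l => (y' l : ℝ)) S T hScard
          (fun l hl => by show ((xs l : ℝ)) = ((xs i : ℝ)); exact_mod_cast hb l hl)
          (fun l hl => by show ((xs l : ℝ)) = ((xs j : ℝ)); exact_mod_cast ha l hl)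
          hy'b hy'a hxsP
      obtain ⟨z, hzsum, hzdec, hzi, hzj, hzo⟩ := unit_move xs i j hij2 c
      set d : ℝ := (xs i : ℝ) - (xs j : ℝ) with hd
      have hd2 : (2 : ℝ) ≤ d := by
        rw [hd]
        have : ((xs j : ℤ) : ℝ) + 2 ≤ ((xs i : ℤ) : ℝ) := by exact_mod_cast hij2
        linarith
      have hdne : d ≠ 0 := by linarith
      have hzP : (fun l => (z l : ℝ)) ∈ P := by
        have heq : (fun l => (z l : ℝ))
            = fun l => (1 - 1 / d) * (xs l : ℝ) + (1 - (1 - 1 / d)) * (y' l : ℝ) := by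
          funext l
          rcases eq_or_ne l i with rfl | h1
          · rw [hzi, hy'i]
            push_cast
            field_simp
            ring
          rcases eq_or_ne l j with rfl | h2
          · rw [hzj, hy'j]
            push_cast
            field_simp
            ring
          · rw [hzo l h1 h2, hy'o l h1 h2]
            ring
        rw [heq, hP]
        rw [hP] at hxsP hY'P
        apply convex_mem A b hxsP hY'P
        · have : 1 / d ≤ 1 / 2 := by
            apply one_div_le_one_div_of_le <;> linarith
          linarith
        · have : 0 < 1 / d := by positivity
          linarith
      have hzF : z ∈ F := ⟨hzP, by rw [hzsum]; exact hxssum⟩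
      have := hminF z hzF
      linarith
  -- y is flat
  have hyflat : ∀ i j, y i ≤ y j + 1 := by
    by_contra hcon
    push_neg at hcon
    obtain ⟨i, j, hij⟩ := hcon
    obtain ⟨w, hwsum, hwdec, _, _, _⟩ := unit_move y i j (by omega) c
    have := hymin w (by rw [hwsum, hysum])
    linarith
  -- shapes
  obtain ⟨a1, S1, hS1n, hS1b, hS1a, hsum1⟩ := flat_shape (by omega) xs hflat
  obtain ⟨a2, S2, hS2n, hS2b, hS2a, hsum2⟩ := flat_shape (by omega) y hyflat
  have hk1 : (n : ℤ) * a1 + S1.card = k := by rw [← hsum1]; exact hxssum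
  have hk2 : (n : ℤ) * a2 + S2.card = k := by rw [← hsum2]; exact hysum
  have hb1 : (S1.card : ℤ) < n := by exact_mod_cast hS1n
  have hb2 : (S2.card : ℤ) < n := by exact_mod_cast hS2n
  have hb1' : (0 : ℤ) ≤ S1.card := Int.natCast_nonneg _
  have hb2' : (0 : ℤ) ≤ S2.card := Int.natCast_nonneg _
  have hnz : (0 : ℤ) ≤ (n : ℤ) := Int.natCast_nonneg _
  have ha12 : a1 = a2 := by
    rcases lt_trichotomy a1 a2 with h | h | h
    · have h1 : (1 : ℤ) ≤ a2 - a1 := by omega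
      have h2 : (n : ℤ) ≤ (n : ℤ) * (a2 - a1) := le_mul_of_one_le_right hnz h1
      nlinarith
    · exact h
    · have h1 : (1 : ℤ) ≤ a1 - a2 := by omega
      have h2 : (n : ℤ) ≤ (n : ℤ) * (a1 - a2) := le_mul_of_one_le_right hnz h1
      nlinarith
  have hcard12 : S1.card = S2.card := by
    have h1 : (S1.card : ℤ) = (S2.card : ℤ) := by
      rw [ha12] at hk1
      omega
    exact_mod_cast h1
  exact two_valued_transfer hn A b P Γ hfeas hobj hsigned htrans
    ((a1 : ℝ)) ((a1 : ℝ) + 1) (fun l => (xs l : ℝ)) (fun l => (y l : ℝ)) S1 S2 hcard12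
    (fun l hl => by show ((xs l : ℝ)) = (a1 : ℝ) + 1; rw [hS1b l hl]; push_cast; ring)
    (fun l hl => by show ((xs l : ℝ)) = (a1 : ℝ); rw [hS1a l hl])
    (fun l hl => by show ((y l : ℝ)) = (a1 : ℝ) + 1; rw [hS2b l hl, ← ha12]; push_cast; ring)
    (fun l hl => by show ((y l : ℝ)) = (a1 : ℝ); rw [hS2a l hl, ha12])
    hxsP
end

section
/- Let n ≥ 2, r ∈ {2,...,n−1}, and r/n < λ < 1. The vertices of the (r,n;λ)-hypertruncated cube C'' = conv(C' ∪ {λ·1}), where C' = {x ∈ [0,1]^n : Σ x_i ≤ r}, are exactly the 0/1-vectors e_S for subsets S ⊆ [n] with |S| ≤ r, together with the point λ·1. -/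
/-!
Every extreme point of `conv (C' ∪ {λ𝟙})` lies in `C' ∪ {λ𝟙}`, and one lying in `C'` is extreme
in `C'`. An extreme point `x` of `C'` is a 0/1-vector: two fractional coordinates could be moved
by `±ε` in opposite directions without changing `∑ xᵢ`, and a single fractional coordinate makes
`∑ xᵢ` non-integral, hence `< r`, so that coordinate can be moved alone. Conversely, `e_S` is
extreme already in the unit cube, which contains `C''`, and `λ𝟙` is the unique maximiser of
`∑ xᵢ` on `C''`, since `∑ xᵢ ≤ r < nλ` on `C'`.
-/

open Set Finset

section Convex

variable {E : Type*} [AddCommGroup E] [Module ℝ E] {A s : Set E} {x p d : E}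

lemma eq_zero_of_add_mem_of_sub_mem_of_mem_extremePoints (hx : x ∈ A.extremePoints ℝ)
    (hadd : x + d ∈ A) (hsub : x - d ∈ A) : d = 0 := by
  have h := ((mem_extremePoints.1 hx).2 _ hadd _ hsub
    ⟨1 / 2, 1 / 2, by norm_num, by norm_num, by norm_num, by module⟩).1
  simpa using h

lemma mem_extremePoints_of_forall_ne_lt (f : E →ₗ[ℝ] ℝ) (hx : x ∈ A)
    (hlt : ∀ y ∈ A, y ≠ x → f y < f x) : x ∈ A.extremePoints ℝ := by
  have hle : ∀ y ∈ A, f y ≤ f x := fun y hy =>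
    (eq_or_ne y x).elim (fun h => h ▸ le_rfl) fun h => (hlt y hy h).le
  refine ⟨hx, fun y hy z hz ⟨a, b, ha, hb, hab, hyz⟩ => ?_⟩
  have hf : a * f y + b * f z = f x := by simp [← hyz]
  by_contra hne
  have hfx : a * f x + b * f x = f x := by rw [← add_mul, hab, one_mul]
  linarith [mul_lt_mul_of_pos_left (hlt y hy hne) ha, mul_le_mul_of_nonneg_left (hle z hz) hb.le]

lemma mem_extremePoints_convexHull_insert (f : E →ₗ[ℝ] ℝ) {c : ℝ} (hs : ∀ z ∈ s, f z ≤ c)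
    (hp : c < f p) : p ∈ (convexHull ℝ (insert p s)).extremePoints ℝ := by
  rcases s.eq_empty_or_nonempty with rfl | hne
  · simp
  refine mem_extremePoints_of_forall_ne_lt f (subset_convexHull ℝ _ (mem_insert p s)) ?_
  intro y hy hyp
  rw [convexHull_insert hne, convexJoin_singleton_left] at hy
  obtain ⟨z, hz, a, b, ha, hb, hab, rfl⟩ := mem_iUnion₂.1 hy
  have hfz : f z ≤ c := convexHull_min hs ((convex_Iic c).linear_preimage f) hz
  rcases hb.eq_or_lt with rfl | hb0
  · obtain rfl : a = 1 := by linarith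
    simp at hyp
  have hfy : f (a • p + b • z) = f p - b * (f p - f z) := by
    simp only [map_add, map_smul, smul_eq_mul]
    linear_combination f p * hab
  rw [hfy]
  linarith [mul_pos hb0 (sub_pos.2 (hfz.trans_lt hp))]

end Convex

section Cube

variable {ι : Type*}

def unitCube (ι : Type*) : Set (ι → ℝ) := {x | ∀ i, 0 ≤ x i ∧ x i ≤ 1}

def cubeVertex [DecidableEq ι] (S : Finset ι) : ι → ℝ := fun i => if i ∈ S then 1 else 0

lemma unitCube_eq_pi : unitCube ι = univ.pi fun _ => Icc 0 1 := by
  ext x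
  simp only [mem_univ_pi, Set.mem_Icc]
  rfl

lemma convex_unitCube : Convex ℝ (unitCube ι) := by
  rw [unitCube_eq_pi]
  exact convex_pi fun _ _ => convex_Icc 0 1

lemma cubeVertex_mem_extremePoints_unitCube [DecidableEq ι] (S : Finset ι) :
    cubeVertex S ∈ (unitCube ι).extremePoints ℝ := by
  rw [unitCube_eq_pi, extremePoints_pi]
  intro i _
  by_cases h : i ∈ S <;> simp [cubeVertex, h]

lemma sum_eq_card_filter_of_forall_eq_zero_or_one {s : Finset ι} {x : ι → ℝ}
    (h : ∀ i ∈ s, x i = 0 ∨ x i = 1) : ∑ i ∈ s, x i = #(s.filter (x · = 1)) := by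
  rw [← sum_boole]
  refine sum_congr rfl fun i hi => ?_
  rcases h i hi with h | h <;> simp [h]

variable [Fintype ι] {r : ℕ} {x : ι → ℝ}

def truncatedCube (ι : Type*) [Fintype ι] (r : ℕ) : Set (ι → ℝ) :=
  {x | (∀ i, 0 ≤ x i ∧ x i ≤ 1) ∧ ∑ i, x i ≤ r}

lemma eq_cubeVertex_of_forall_eq_zero_or_one [DecidableEq ι] (h : ∀ i, x i = 0 ∨ x i = 1) :
    x = cubeVertex (univ.filter (x · = 1)) := by
  funext i
  rcases h i with h | h <;> simp [cubeVertex, h]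

lemma sum_cubeVertex [DecidableEq ι] (S : Finset ι) : ∑ i, cubeVertex S i = #S := by
  simp [cubeVertex]

lemma cubeVertex_mem_truncatedCube [DecidableEq ι] {S : Finset ι} (hS : #S ≤ r) :
    cubeVertex S ∈ truncatedCube ι r :=
  ⟨(cubeVertex_mem_extremePoints_unitCube S).1, by rw [sum_cubeVertex]; exact_mod_cast hS⟩

lemma sum_ne_natCast_of_unique_fractional {i : ι} (hi0 : 0 < x i) (hi1 : x i < 1)
    (h : ∀ j ≠ i, x j = 0 ∨ x j = 1) (m : ℕ) : ∑ k, x k ≠ m := by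
  classical
  rw [← add_sum_erase _ _ (mem_univ i), sum_eq_card_filter_of_forall_eq_zero_or_one
    fun j hj => h j (ne_of_mem_erase hj)]
  intro hm
  set c := #((univ.erase i).filter (x · = 1))
  have hc : c < m := by exact_mod_cast (by linarith : (c : ℝ) < m)
  have hm : m < c + 1 := by exact_mod_cast (by linarith : (m : ℝ) < c + 1)
  omega

lemma add_mem_truncatedCube {d : ι → ℝ}
    (hd : ∀ k, |d k| ≤ min (x k) (1 - x k)) (hsum : |∑ k, d k| ≤ r - ∑ k, x k) :
    x + d ∈ truncatedCube ι r := by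
  refine ⟨fun k => ?_, ?_⟩
  · have := abs_le.1 (hd k)
    have := min_le_left (x k) (1 - x k)
    have := min_le_right (x k) (1 - x k)
    simp only [Pi.add_apply]
    constructor <;> linarith
  · simp only [Pi.add_apply, sum_add_distrib]
    linarith [(abs_le.1 hsum).2]

lemma eq_zero_of_mem_extremePoints_truncatedCube (hx : x ∈ (truncatedCube ι r).extremePoints ℝ)
    {d : ι → ℝ} (hd : ∀ k, |d k| ≤ min (x k) (1 - x k)) (hsum : |∑ k, d k| ≤ r - ∑ k, x k) :
    d = 0 := by
  refine eq_zero_of_add_mem_of_sub_mem_of_mem_extremePoints hx (add_mem_truncatedCube hd hsum) ?_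
  rw [sub_eq_add_neg]
  exact add_mem_truncatedCube (by simpa using hd) (by simpa [sum_neg_distrib] using hsum)

lemma subsingleton_fractional_of_mem_extremePoints_truncatedCube
    (hx : x ∈ (truncatedCube ι r).extremePoints ℝ) : {i | 0 < x i ∧ x i < 1}.Subsingleton := by
  classical
  rintro i ⟨hi0, hi1⟩ j ⟨hj0, hj1⟩
  by_contra hij
  obtain ⟨ε, hε, hεi, hεj⟩ : ∃ ε > 0, ε ≤ min (x i) (1 - x i) ∧ ε ≤ min (x j) (1 - x j) :=
    ⟨_, lt_min (lt_min hi0 (sub_pos.2 hi1)) (lt_min hj0 (sub_pos.2 hj1)), min_le_left _ _,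
      min_le_right _ _⟩
  have hd := eq_zero_of_mem_extremePoints_truncatedCube hx
    (d := Pi.single i ε - Pi.single j ε) ?_ ?_
  · have := congrFun hd i
    simp [hij] at this
    exact hε.ne' this
  · have hslack : ∀ k, 0 ≤ min (x k) (1 - x k) := fun k =>
      le_min (hx.1.1 k).1 (sub_nonneg.2 (hx.1.1 k).2)
    intro k
    rcases eq_or_ne k i with rfl | hki
    · simpa [hij, abs_of_pos hε] using hεi
    rcases eq_or_ne k j with rfl | hkj
    · simpa [hki, abs_of_pos hε] using hεj
    · simpa [hki, hkj] using hslack k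
  · simpa using hx.1.2

lemma sum_eq_of_mem_extremePoints_truncatedCube (hx : x ∈ (truncatedCube ι r).extremePoints ℝ)
    {i : ι} (hi0 : 0 < x i) (hi1 : x i < 1) : ∑ k, x k = r := by
  classical
  by_contra hne
  have hlt : ∑ k, x k < r := lt_of_le_of_ne hx.1.2 hne
  obtain ⟨ε, hε, hεi, hεr⟩ : ∃ ε > 0, ε ≤ min (x i) (1 - x i) ∧ ε ≤ r - ∑ k, x k :=
    ⟨_, lt_min (lt_min hi0 (sub_pos.2 hi1)) (sub_pos.2 hlt), min_le_left _ _, min_le_right _ _⟩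
  have hd := eq_zero_of_mem_extremePoints_truncatedCube hx (d := Pi.single i ε) ?_ ?_
  · have := congrFun hd i
    simp at this
    exact hε.ne' this
  · intro k
    rcases eq_or_ne k i with rfl | hki
    · simpa [abs_of_pos hε] using hεi
    · simpa [hki] using le_min (hx.1.1 k).1 (sub_nonneg.2 (hx.1.1 k).2)
  · simpa [abs_of_pos hε] using hεr

lemma eq_zero_or_one_of_mem_extremePoints_truncatedCube
    (hx : x ∈ (truncatedCube ι r).extremePoints ℝ) (i : ι) : x i = 0 ∨ x i = 1 := by
  have hfrac : ∀ j, x j = 0 ∨ x j = 1 ∨ (0 < x j ∧ x j < 1) := fun j => by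
    obtain ⟨h0, h1⟩ := hx.1.1 j
    grind
  by_contra hi
  obtain ⟨hi0, hi1⟩ := (hfrac i).resolve_left (not_or.1 hi).1 |>.resolve_left (not_or.1 hi).2
  have hothers : ∀ j ≠ i, x j = 0 ∨ x j = 1 := fun j hji =>
    (or_assoc.2 (hfrac j)).resolve_right fun hj =>
      hji (subsingleton_fractional_of_mem_extremePoints_truncatedCube hx hj ⟨hi0, hi1⟩)
  exact sum_ne_natCast_of_unique_fractional hi0 hi1 hothers r
    (sum_eq_of_mem_extremePoints_truncatedCube hx hi0 hi1)

lemma extremePoints_truncatedCube_subset [DecidableEq ι] :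
    (truncatedCube ι r).extremePoints ℝ ⊆ {x | ∃ S : Finset ι, #S ≤ r ∧ x = cubeVertex S} := by
  intro x hx
  have h01 := eq_zero_or_one_of_mem_extremePoints_truncatedCube hx
  refine ⟨univ.filter (x · = 1), ?_, eq_cubeVertex_of_forall_eq_zero_or_one h01⟩
  have hsum := hx.1.2
  rw [sum_eq_card_filter_of_forall_eq_zero_or_one fun i _ => h01 i] at hsum
  exact_mod_cast hsum

end Cube

theorem vertices_of_hypertruncated_cube_general
    (n r : ℕ) (hn : 2 ≤ n)
    (lam : ℝ) (hlam1 : (r : ℝ) / (n : ℝ) < lam) (hlam2 : lam < 1)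
    (C' : Set (Fin n → ℝ))
    (hC' : C' = {x | (∀ i, 0 ≤ x i ∧ x i ≤ 1) ∧ (∑ i, x i) ≤ (r : ℝ)})
    (C'' : Set (Fin n → ℝ))
    (hC'' : C'' = convexHull ℝ (C' ∪ {fun _ => lam})) :
    Set.extremePoints ℝ C''
      = {x | ∃ S : Finset (Fin n), S.card ≤ r ∧
            x = fun i => if i ∈ S then (1 : ℝ) else 0}
        ∪ {fun _ => lam} := by
  subst hC' hC''
  rw [union_singleton]
  change (convexHull ℝ (insert (fun _ => lam) (truncatedCube (Fin n) r))).extremePoints ℝ =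
    {x | ∃ S : Finset (Fin n), #S ≤ r ∧ x = cubeVertex S} ∪ {fun _ => lam}
  have hlam0 : 0 ≤ lam := (div_nonneg r.cast_nonneg n.cast_nonneg).trans hlam1.le
  have hr_lt : (r : ℝ) < ∑ _ : Fin n, lam := by
    have hn0 : (0 : ℝ) < n := by exact_mod_cast (by omega : 0 < n)
    simpa [mul_comm] using (div_lt_iff₀ hn0).1 hlam1
  have hcube : convexHull ℝ (insert (fun _ => lam) (truncatedCube (Fin n) r)) ⊆ unitCube (Fin n) :=
    convexHull_min (insert_subset (fun _ => ⟨hlam0, hlam2.le⟩) fun _ hx => hx.1) convex_unitCube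
  ext x
  constructor
  · intro hx
    rcases extremePoints_convexHull_subset hx with rfl | hxC'
    · exact Or.inr rfl
    · exact Or.inl <| extremePoints_truncatedCube_subset <|
        inter_extremePoints_subset_extremePoints_of_subset
          ((subset_insert _ _).trans (subset_convexHull ℝ _)) ⟨hxC', hx⟩
  · rintro (⟨S, hS, rfl⟩ | rfl)
    · exact inter_extremePoints_subset_extremePoints_of_subset hcube
        ⟨subset_convexHull ℝ _ (mem_insert_of_mem _ (cubeVertex_mem_truncatedCube hS)),
          cubeVertex_mem_extremePoints_unitCube S⟩
    · exact mem_extremePoints_convexHull_insert (∑ i, LinearMap.proj i)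
        (fun z hz => by simpa using hz.2) (by simpa using hr_lt)

/-- Let `n ≥ 2`, `r ∈ {2,…,n−1}`, and `r/n < λ < 1`.  The vertices (extreme
points) of the `(r,n;λ)`-hypertruncated cube `C'' = conv(C' ∪ {λ·𝟙})`, where
`C' = {x ∈ [0,1]ⁿ : Σ xᵢ ≤ r}`, are exactly the 0/1-vectors `e_S` for
`S ⊆ [n]` with `|S| ≤ r`, together with the point `λ·𝟙`. -/
theorem vertices_of_hypertruncated_cube
    (n r : ℕ) (hn : 2 ≤ n) (hr2 : 2 ≤ r) (hrn : r ≤ n - 1)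
    (lam : ℝ) (hlam1 : (r : ℝ) / (n : ℝ) < lam) (hlam2 : lam < 1)
    (C' : Set (Fin n → ℝ))
    (hC' : C' = {x | (∀ i, 0 ≤ x i ∧ x i ≤ 1) ∧ (∑ i, x i) ≤ (r : ℝ)})
    (C'' : Set (Fin n → ℝ))
    (hC'' : C'' = convexHull ℝ (C' ∪ {fun _ => lam})) :
    Set.extremePoints ℝ C''
      = {x | ∃ S : Finset (Fin n), S.card ≤ r ∧
            x = fun i => if i ∈ S then (1 : ℝ) else 0}
        ∪ {fun _ => lam} :=
  vertices_of_hypertruncated_cube_general n r hn lam hlam1 hlam2 C' hC' C'' hC''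
end

section
/- If the group Γ of signed permutation automorphisms of ILP(A,b,c) acts sub-transitively on the signed standard basis, P(A,b) is a full-dimensional polytope, and c ≠ 0, then Γ acts semi-transitively (two opposite orbits of length n), and c lies in the one-dimensional fixed space Fix_Γ(R^n). -/
open Matrix

/-- If the group `Γ` of signed permutation automorphisms of `ILP(A,b,c)` acts
sub-transitively on the signed standard basis, `P(A,b)` is a full-dimensional
(bounded) polytope, and `c ≠ 0`, then `Γ` acts semi-transitively (two opposite
orbits of length `n`), and `c` lies in the one-dimensional fixed space
`Fix_Γ(ℝⁿ)`. -/
theorem subtransitive_with_objective_is_semitransitive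
    (m n : ℕ) (hn : 0 < n)
    (A : Matrix (Fin m) (Fin n) ℝ) (b : Fin m → ℝ) (c : Fin n → ℝ) (hc : c ≠ 0)
    (P : Set (Fin n → ℝ)) (hP : P = {x | A.mulVec x ≤ b})
    (hbdd : Bornology.IsBounded P) (hfull : affineSpan ℝ P = ⊤)
    (Γ : Subgroup (GL (Fin n) ℝ))
    (hfeas : ∀ γ ∈ Γ, (fun x => γ.val.mulVec x) '' P = P)
    (hobj : ∀ γ ∈ Γ, ∀ x ∈ P, c ⬝ᵥ γ.val.mulVec x = c ⬝ᵥ x)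
    (S : Set (Fin n → ℝ))
    (hS : S = {v | ∃ i : Fin n, v = Pi.single i 1 ∨ v = -Pi.single i 1})
    (hsigned : ∀ γ ∈ Γ, ∀ v ∈ S, γ.val.mulVec v ∈ S)
    (orb : (Fin n → ℝ) → Set (Fin n → ℝ))
    (horb : ∀ v, orb v = {w | ∃ γ ∈ Γ, γ.val.mulVec v = w})
    (hsub : ∀ I : Set (Fin n), I.Nonempty → I ≠ Set.univ →
      ¬ (∀ γ ∈ Γ, ∀ x ∈ Submodule.span ℝ ((fun i => Pi.single i (1:ℝ)) '' I),
            γ.val.mulVec x ∈ Submodule.span ℝ ((fun i => Pi.single i (1:ℝ)) '' I))) :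
    (∃ v ∈ S,
        (orb v).ncard = n ∧
        orb v ≠ (fun y => -y) '' orb v ∧
        (∀ w ∈ S, orb w = orb v ∨ orb w = (fun y => -y) '' orb v)) ∧
    (∀ γ ∈ Γ, γ.val.mulVec c = c) ∧
    {x | ∀ γ ∈ Γ, γ.val.mulVec x = x} = ↑(Submodule.span ℝ {c}) := by
  classical
  set i0 : Fin n := ⟨0, hn⟩ with hi0
  -- cancellation lemmas
  have hcancel1 : ∀ (γ : GL (Fin n) ℝ) (x : Fin n → ℝ),
      γ.val.mulVec ((γ⁻¹).val.mulVec x) = x := by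
    intro γ x
    rw [Matrix.mulVec_mulVec, ← Units.val_mul, mul_inv_cancel, Units.val_one,
      Matrix.one_mulVec]
  have hcancel2 : ∀ (γ : GL (Fin n) ℝ) (x : Fin n → ℝ),
      (γ⁻¹).val.mulVec (γ.val.mulVec x) = x := by
    intro γ x
    rw [Matrix.mulVec_mulVec, ← Units.val_mul, inv_mul_cancel, Units.val_one,
      Matrix.one_mulVec]
  have hinj : ∀ (γ : GL (Fin n) ℝ), ∀ x y : Fin n → ℝ,
      γ.val.mulVec x = γ.val.mulVec y → x = y := by
    intro γ x y hxy
    have h := congrArg (fun z => (γ⁻¹).val.mulVec z) hxy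
    simpa only [hcancel2] using h
  -- basic facts about S
  have hSmem : ∀ i : Fin n, (Pi.single i (1:ℝ)) ∈ S := by
    intro i; rw [hS]; exact ⟨i, Or.inl rfl⟩
  have hSnegmem : ∀ i : Fin n, (-Pi.single i (1:ℝ)) ∈ S := by
    intro i; rw [hS]; exact ⟨i, Or.inr rfl⟩
  have hsne : ∀ i j : Fin n, (Pi.single i 1 : Fin n → ℝ) ≠ -Pi.single j 1 := by
    intro i j h
    have h2 := congrFun h i
    simp only [Pi.neg_apply, Pi.single_apply] at h2
    rcases eq_or_ne i j with rfl | hij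
    · simp at h2; linarith
    · rw [if_neg hij] at h2; norm_num at h2
  have hsinj : ∀ i j : Fin n, (Pi.single i 1 : Fin n → ℝ) = Pi.single j 1 → i = j := by
    intro i j h
    by_contra hij
    have h2 := congrFun h i
    simp [Pi.single_apply, hij, fun h' : j = i => hij h'.symm] at h2
  -- orbit lemmas
  have horb_mem : ∀ v, v ∈ orb v := by
    intro v; rw [horb]
    exact ⟨1, Γ.one_mem, by simp⟩
  have horb_closed : ∀ γ ∈ Γ, ∀ v w, w ∈ orb v → γ.val.mulVec w ∈ orb v := by
    intro γ hγ v w hw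
    rw [horb] at hw ⊢
    obtain ⟨δ, hδ, rfl⟩ := hw
    exact ⟨γ * δ, Γ.mul_mem hγ hδ, by rw [Units.val_mul, ← Matrix.mulVec_mulVec]⟩
  have horb_eq : ∀ v w, w ∈ orb v → orb w = orb v := by
    intro v w hw
    rw [horb] at hw
    obtain ⟨δ, hδ, rfl⟩ := hw
    ext u
    rw [horb, horb]
    constructor
    · rintro ⟨γ, hγ, rfl⟩
      exact ⟨γ * δ, Γ.mul_mem hγ hδ, by rw [Units.val_mul, ← Matrix.mulVec_mulVec]⟩
    · rintro ⟨γ, hγ, rfl⟩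
      refine ⟨γ * δ⁻¹, Γ.mul_mem hγ (Γ.inv_mem hδ), ?_⟩
      rw [Units.val_mul, ← Matrix.mulVec_mulVec, hcancel2]
  have horb_neg : ∀ v, (fun y => -y) '' orb v = orb (-v) := by
    intro v
    ext u
    simp only [Set.mem_image, horb, Set.mem_setOf_eq]
    constructor
    · rintro ⟨w, ⟨γ, hγ, rfl⟩, rfl⟩
      exact ⟨γ, hγ, by rw [Matrix.mulVec_neg]⟩
    · rintro ⟨γ, hγ, rfl⟩
      exact ⟨γ.val.mulVec v, ⟨γ, hγ, rfl⟩, by rw [Matrix.mulVec_neg]⟩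
  have horb_subS : ∀ v ∈ S, orb v ⊆ S := by
    intro v hv u hu
    rw [horb] at hu
    obtain ⟨γ, hγ, rfl⟩ := hu
    exact hsigned γ hγ v hv
  -- orthogonality
  have horth : ∀ γ ∈ Γ, ∀ x y : Fin n → ℝ,
      (γ.val.mulVec x) ⬝ᵥ (γ.val.mulVec y) = x ⬝ᵥ y := by
    intro γ hγ x y
    have hTT : γ.valᵀ * γ.val = 1 := by
      ext i j
      have hentry : (γ.valᵀ * γ.val) i j
          = (γ.val.mulVec (Pi.single i 1)) ⬝ᵥ (γ.val.mulVec (Pi.single j 1)) := by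
        simp [Matrix.mul_apply, Matrix.mulVec_single, dotProduct,
          Matrix.transpose_apply]
      have hi := hsigned γ hγ _ (hSmem i)
      have hj := hsigned γ hγ _ (hSmem j)
      rw [hS] at hi hj
      obtain ⟨a, ha⟩ := hi
      obtain ⟨b, hb⟩ := hj
      rcases eq_or_ne i j with rfl | hij
      · rw [Matrix.one_apply_eq, hentry]
        rcases ha with ha | ha <;>
          simp [ha, single_dotProduct, Pi.single_apply]
      · have hab : a ≠ b := by
          rintro rfl
          rcases ha with ha | ha <;> rcases hb with hb | hb
          · exact hij (hsinj i j (hinj γ _ _ (ha.symm ▸ hb.symm ▸ rfl)))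
          · have : γ.val.mulVec (Pi.single i 1) = γ.val.mulVec (-Pi.single j 1) := by
              rw [Matrix.mulVec_neg, ha, hb, neg_neg]
            exact hsne i j (hinj γ _ _ this)
          · have : γ.val.mulVec (Pi.single j 1) = γ.val.mulVec (-Pi.single i 1) := by
              rw [Matrix.mulVec_neg, hb, ha, neg_neg]
            exact hsne j i (hinj γ _ _ this)
          · have : γ.val.mulVec (Pi.single i 1) = γ.val.mulVec (Pi.single j 1) := by
              rw [ha, hb]
            exact hij (hsinj i j (hinj γ _ _ this))
        rw [Matrix.one_apply_ne hij, hentry]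
        rcases ha with ha | ha <;> rcases hb with hb | hb <;>
          simp [ha, hb, single_dotProduct, Pi.single_apply, hab]
    calc (γ.val.mulVec x) ⬝ᵥ (γ.val.mulVec y)
        = ((γ.val.mulVec x) ᵥ* γ.val) ⬝ᵥ y := Matrix.dotProduct_mulVec _ _ _
      _ = x ⬝ᵥ y := by
          rw [← Matrix.vecMul_transpose, Matrix.vecMul_vecMul, hTT, Matrix.vecMul_one]
  -- the objective is preserved everywhere, not just on P
  have hobj' : ∀ γ ∈ Γ, ∀ x : Fin n → ℝ, c ⬝ᵥ γ.val.mulVec x = c ⬝ᵥ x := by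
    intro γ hγ x
    set f : (Fin n → ℝ) →ₗ[ℝ] ℝ :=
      { toFun := fun x => c ⬝ᵥ γ.val.mulVec x - c ⬝ᵥ x
        map_add' := by
          intro x y
          simp [Matrix.mulVec_add, dotProduct_add]
          ring
        map_smul' := by
          intro r x
          simp [Matrix.mulVec_smul, dotProduct_smul, smul_eq_mul]
          ring } with hf
    have hker : P ⊆ (LinearMap.ker f : Set (Fin n → ℝ)) := by
      intro z hz
      simp only [SetLike.mem_coe, LinearMap.mem_ker, hf, LinearMap.coe_mk, AddHom.coe_mk]
      rw [hobj γ hγ z hz, sub_self]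
    have hle : affineSpan ℝ P ≤ (LinearMap.ker f).toAffineSubspace := by
      rw [affineSpan_le]
      exact hker
    rw [hfull] at hle
    have hx : x ∈ (LinearMap.ker f).toAffineSubspace := hle (AffineSubspace.mem_top ℝ _ x)
    have hx0 : f x = 0 := hx
    have := sub_eq_zero.mp hx0
    simpa [hf] using this
  -- surjectivity of each γ
  have hsurj : ∀ γ ∈ Γ, ∀ y : Fin n → ℝ, ∃ x, γ.val.mulVec x = y := by
    intro γ _ y
    exact ⟨(γ⁻¹).val.mulVec y, hcancel1 γ y⟩
  -- c is fixed
  have hfixc : ∀ γ ∈ Γ, γ.val.mulVec c = c := by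
    intro γ hγ
    funext j
    obtain ⟨x, hx⟩ := hsurj γ hγ (Pi.single j 1)
    have h1 : (γ.val.mulVec c) ⬝ᵥ (Pi.single j (1:ℝ)) = c ⬝ᵥ x := by
      rw [← hx]; exact horth γ hγ c x
    have h2 : c ⬝ᵥ x = c ⬝ᵥ (Pi.single j (1:ℝ)) := by
      rw [← hx]; exact (hobj' γ hγ x).symm
    have h3 := h1.trans h2
    simpa [dotProduct_single] using h3
  -- covering: every ±e_i is in the union of orb v and orb (-v)
  have hcov : ∀ v ∈ S, ∀ i : Fin n,
      Pi.single i (1:ℝ) ∈ orb v ∨ -Pi.single i (1:ℝ) ∈ orb v := by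
    intro v hv
    by_contra hcon
    push_neg at hcon
    obtain ⟨i', hi'1, hi'2⟩ := hcon
    set I : Set (Fin n) :=
      {i | Pi.single i (1:ℝ) ∈ orb v ∨ -Pi.single i (1:ℝ) ∈ orb v} with hI
    have hne : I.Nonempty := by
      have hv' := hv
      rw [hS] at hv'
      obtain ⟨i₁, h₁ | h₁⟩ := hv'
      · exact ⟨i₁, Or.inl (h₁ ▸ horb_mem v)⟩
      · exact ⟨i₁, Or.inr (h₁ ▸ horb_mem v)⟩
    have hnuniv : I ≠ Set.univ := by
      intro h
      have : i' ∈ I := h ▸ Set.mem_univ i'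
      rcases this with h' | h'
      · exact hi'1 h'
      · exact hi'2 h'
    refine hsub I hne hnuniv ?_
    intro γ hγ x hx
    induction hx using Submodule.span_induction with
    | mem y hy =>
        obtain ⟨i, hiI, rfl⟩ := hy
        have hgS := hsigned γ hγ _ (hSmem i)
        rw [hS] at hgS
        obtain ⟨j, hj | hj⟩ := hgS
        · have hjI : j ∈ I := by
            rcases hiI with hiI | hiI
            · exact Or.inl (hj ▸ horb_closed γ hγ v _ hiI)
            · refine Or.inr ?_
              have h := horb_closed γ hγ v _ hiI
              rwa [Matrix.mulVec_neg, hj] at h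
          rw [hj]
          exact Submodule.subset_span ⟨j, hjI, rfl⟩
        · have hjI : j ∈ I := by
            rcases hiI with hiI | hiI
            · exact Or.inr (hj ▸ horb_closed γ hγ v _ hiI)
            · refine Or.inl ?_
              have h := horb_closed γ hγ v _ hiI
              rwa [Matrix.mulVec_neg, hj, neg_neg] at h
          rw [hj]
          exact Submodule.neg_mem _ (Submodule.subset_span ⟨j, hjI, rfl⟩)
    | zero => simp
    | add x y hx hy hx' hy' =>
        rw [Matrix.mulVec_add]; exact Submodule.add_mem _ hx' hy'
    | smul r x hx hx' =>
        rw [Matrix.mulVec_smul]; exact Submodule.smul_mem _ _ hx'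
  -- fixed vectors have constant dot product along the base orbit
  have hdotfix : ∀ x : Fin n → ℝ, (∀ γ ∈ Γ, γ.val.mulVec x = x) →
      ∀ u ∈ orb (Pi.single i0 (1:ℝ)), x ⬝ᵥ u = x i0 := by
    intro x hx u hu
    rw [horb] at hu
    obtain ⟨γ, hγ, rfl⟩ := hu
    have h := horth γ hγ x (Pi.single i0 1)
    rw [hx γ hγ] at h
    rw [h, dotProduct_single, mul_one]
  -- the base orbit is disjoint from its negation
  have hdisj : ∀ w, w ∈ orb (Pi.single i0 (1:ℝ)) → -w ∉ orb (Pi.single i0 (1:ℝ)) := by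
    intro w hw hnw
    have hOneg : orb (-(Pi.single i0 (1:ℝ))) = orb (Pi.single i0 (1:ℝ)) := by
      have h1 : orb (-w) = orb (Pi.single i0 (1:ℝ)) := horb_eq _ _ hnw
      have h2 : -w ∈ orb (-(Pi.single i0 (1:ℝ))) := by
        rw [← horb_neg]; exact ⟨w, hw, rfl⟩
      rw [← horb_eq _ _ h2]
      exact h1
    have hzero : ∀ i, c i = 0 := by
      intro i
      have hboth : Pi.single i (1:ℝ) ∈ orb (Pi.single i0 (1:ℝ)) ∧
          -Pi.single i (1:ℝ) ∈ orb (Pi.single i0 (1:ℝ)) := by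
        rcases hcov _ (hSmem i0) i with h | h
        · refine ⟨h, ?_⟩
          rw [← hOneg, ← horb_neg]
          exact ⟨_, h, rfl⟩
        · refine ⟨?_, h⟩
          rw [← hOneg, ← horb_neg]
          exact ⟨_, h, by simp⟩
      have h1 := hdotfix c hfixc _ hboth.1
      have h2 := hdotfix c hfixc _ hboth.2
      rw [dotProduct_single, mul_one] at h1
      rw [dotProduct_neg, dotProduct_single, mul_one] at h2
      linarith
    exact hc (funext fun i => hzero i)
  -- S is finite with 2n elements
  have hSeq : S = (Set.range fun i : Fin n => Pi.single i (1:ℝ)) ∪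
      (Set.range fun i : Fin n => -Pi.single i (1:ℝ)) := by
    rw [hS]
    ext u
    simp only [Set.mem_setOf_eq, Set.mem_union, Set.mem_range]
    constructor
    · rintro ⟨i, h | h⟩
      · exact Or.inl ⟨i, h.symm⟩
      · exact Or.inr ⟨i, h.symm⟩
    · rintro (⟨i, h⟩ | ⟨i, h⟩)
      · exact ⟨i, Or.inl h.symm⟩
      · exact ⟨i, Or.inr h.symm⟩
  have hinjA : Function.Injective fun i : Fin n => Pi.single i (1:ℝ) :=
    fun i j h => hsinj i j h
  have hinjB : Function.Injective fun i : Fin n => -Pi.single i (1:ℝ) := by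
    intro i j h
    exact hsinj i j (neg_injective h)
  have hSfin : S.Finite := by
    rw [hSeq]
    exact (Set.finite_range _).union (Set.finite_range _)
  have hScard : S.ncard = 2 * n := by
    rw [hSeq, Set.ncard_union_eq ?disj (Set.finite_range _) (Set.finite_range _)]
    · rw [← Set.image_univ, ← Set.image_univ, Set.ncard_image_of_injective _ hinjA,
        Set.ncard_image_of_injective _ hinjB, Set.ncard_univ]
      simp [Nat.card_eq_fintype_card]
      omega
    case disj =>
      rw [Set.disjoint_left]
      rintro u ⟨i, rfl⟩ ⟨j, hj⟩
      exact hsne i j hj.symm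
  -- union of the base orbit with its negation is S
  have hOsub : orb (Pi.single i0 (1:ℝ)) ⊆ S := horb_subS _ (hSmem i0)
  have hunion : orb (Pi.single i0 (1:ℝ)) ∪
      (fun y => -y) '' orb (Pi.single i0 (1:ℝ)) = S := by
    apply Set.Subset.antisymm
    · rintro u (hu | ⟨w, hw, rfl⟩)
      · exact hOsub hu
      · rw [horb] at hw
        obtain ⟨γ, hγ, rfl⟩ := hw
        show -(γ.val.mulVec (Pi.single i0 1)) ∈ S
        rw [← Matrix.mulVec_neg]
        exact hsigned γ hγ _ (hSnegmem i0)
    · intro u hu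
      rw [hS] at hu
      obtain ⟨i, hi | hi⟩ := hu
      · rcases hcov _ (hSmem i0) i with h | h
        · exact Or.inl (hi ▸ h)
        · exact Or.inr ⟨_, h, by simp [hi]⟩
      · rcases hcov _ (hSmem i0) i with h | h
        · exact Or.inr ⟨_, h, hi.symm⟩
        · exact Or.inl (hi ▸ h)
  have hdisj' : Disjoint (orb (Pi.single i0 (1:ℝ)))
      ((fun y => -y) '' orb (Pi.single i0 (1:ℝ))) := by
    rw [Set.disjoint_left]
    rintro u hu ⟨w, hw, rfl⟩
    exact hdisj w hw hu
  have hOfin : (orb (Pi.single i0 (1:ℝ))).Finite := hSfin.subset hOsub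
  have hOcard : (orb (Pi.single i0 (1:ℝ))).ncard = n := by
    have h := Set.ncard_union_eq hdisj' hOfin (hOfin.image _)
    rw [hunion, hScard, Set.ncard_image_of_injective _ neg_injective] at h
    omega
  refine ⟨⟨Pi.single i0 (1:ℝ), hSmem i0, hOcard, ?_, ?_⟩, hfixc, ?_⟩
  · -- orb v ≠ its negation
    intro h
    have h1 : Pi.single i0 (1:ℝ) ∈ orb (Pi.single i0 (1:ℝ)) := horb_mem _
    have h2 := h ▸ h1
    exact (Set.disjoint_left.mp hdisj') h1 h2
  · -- every orbit is the base orbit or its negation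
    intro w hw
    rw [hS] at hw
    obtain ⟨i, hi | hi⟩ := hw
    · rcases hcov _ (hSmem i0) i with h | h
      · exact Or.inl (hi ▸ horb_eq _ _ h)
      · refine Or.inr ?_
        have : w ∈ (fun y => -y) '' orb (Pi.single i0 (1:ℝ)) :=
          ⟨_, h, by simp [hi]⟩
        rw [horb_neg] at this ⊢
        exact horb_eq _ _ this
    · rcases hcov _ (hSmem i0) i with h | h
      · refine Or.inr ?_
        have : w ∈ (fun y => -y) '' orb (Pi.single i0 (1:ℝ)) := ⟨_, h, hi.symm⟩
        rw [horb_neg] at this ⊢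
        exact horb_eq _ _ this
      · exact Or.inl (hi ▸ horb_eq _ _ h)
  · -- the fixed space is the span of c
    have hci0 : c i0 ≠ 0 := by
      intro h0
      apply hc
      funext i
      rcases hcov _ (hSmem i0) i with h | h
      · have := hdotfix c hfixc _ h
        rw [dotProduct_single, mul_one, h0] at this
        simpa using this
      · have := hdotfix c hfixc _ h
        rw [dotProduct_neg, dotProduct_single, mul_one, h0] at this
        simpa using neg_eq_zero.mp (this.trans rfl)
    ext x
    simp only [Set.mem_setOf_eq, SetLike.mem_coe, Submodule.mem_span_singleton]
    constructor
    · intro hx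
      refine ⟨x i0 / c i0, ?_⟩
      funext i
      simp only [Pi.smul_apply, smul_eq_mul]
      rcases hcov _ (hSmem i0) i with h | h
      · have h1 := hdotfix x hx _ h
        have h2 := hdotfix c hfixc _ h
        rw [dotProduct_single, mul_one] at h1 h2
        rw [h2, h1, div_mul_cancel₀ _ hci0]
      · have h1 := hdotfix x hx _ h
        have h2 := hdotfix c hfixc _ h
        rw [dotProduct_neg, dotProduct_single, mul_one] at h1 h2
        have hcieq : c i = -(c i0) := by linarith
        have hxieq : x i = -(x i0) := by linarith
        rw [hcieq, hxieq]
        field_simp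
    · rintro ⟨a, rfl⟩ γ hγ
      rw [Matrix.mulVec_smul, hfixc γ hγ]
end
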